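/- arXiv:2006.01821 — 7 statements merged into one kernel-verified Lean document; each statement's English description precedes it below -/
import Mathlib

section
/- Let p be a prime and 0 < α < 1, and let β be a real number with α−1 < β < α. Then for every x ∈ ℚ_p with x ≠ 0 the integral ∫_{ℚ_p} (‖x‖_p^β − ‖y‖_p^β) ‖x−y‖_p^{−(1+α)} dm(y) converges absolutely and −(1/Γ_p(−α)) ∫_{ℚ_p} (‖x‖_p^β − ‖y‖_p^β) ‖x−y‖_p^{−(1+α)} dm(y) = (Γ_p(β+1)/Γ_p(β+1−α)) · ‖x‖_p^{β−α}. In other words, 𝔇^α applied to the function x ↦ ‖x‖_p^β equals (Γ_p(β+1)/Γ_p(β+1−α)) ‖x‖_p^{β−α} pointwise on ℚ_p ∖ {0}. -/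
/-!
`ℚ_[p] \ {0}` is the disjoint union of the spheres `‖y‖ = p ^ k`, of measure `p ^ k (1 - p⁻¹)`,
and all triangles are isosceles, so `‖x - y‖ = max ‖x‖ ‖y‖` whenever `‖x‖ ≠ ‖y‖`: the integrand is
constant on every sphere and the integral is a sum over `k ∈ ℤ`. Writing `‖y‖ = p ^ j ‖x‖`, each
term is `(1 - p⁻¹) ‖x‖ ^ (β - α)` times a function of `p ^ j` alone, and the sum over `j` splits
into geometric series: those over `j ≥ 0` converge because `β < α`, those over `j < 0` because
`-1 < β`. Their sum equals the quotient of `p`-adic Gamma values by a rational identity.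
-/

open MeasureTheory

noncomputable def gammaP (p : ℕ) (z : ℝ) : ℝ :=
  (1 - (p : ℝ) ^ (z - 1)) / (1 - (p : ℝ) ^ (-z))

open Metric Set Function Real

theorem integrable_and_integral_eq_of_eqOn_const {X ι : Type*} [MeasurableSpace X] [Countable ι]
    {μ : Measure X} {s : ι → Set X} (hs : ∀ i, MeasurableSet (s i))
    (hd : Pairwise (Disjoint on s)) (hcover : ∀ᵐ x ∂μ, x ∈ ⋃ i, s i) (hfin : ∀ i, μ (s i) ≠ ⊤)
    {f : X → ℝ} {c : ι → ℝ} (hfc : ∀ i, EqOn f (fun _ => c i) (s i)) {I : ℝ}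
    (hI : HasSum (fun i => μ.real (s i) * c i) I) :
    Integrable f μ ∧ ∫ x, f x ∂μ = I := by
  have hrestrict : μ.restrict (⋃ i, s i) = μ := Measure.restrict_eq_self_of_ae_mem hcover
  have hpiece : ∀ i, ∫ x in s i, f x ∂μ = μ.real (s i) * c i := fun i => by
    rw [setIntegral_congr_fun (hs i) (hfc i), setIntegral_const, smul_eq_mul]
  have hint : IntegrableOn f (⋃ i, s i) μ := by
    refine integrableOn_iUnion_of_summable_integral_norm
      (fun i => (integrableOn_const (hfin i)).congr_fun (hfc i).symm (hs i)) ?_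
    refine hI.summable.abs.congr fun i => ?_
    rw [setIntegral_congr_fun (hs i) fun y hy => congrArg norm (hfc i hy), setIntegral_const,
      smul_eq_mul, abs_mul, abs_of_nonneg measureReal_nonneg, Real.norm_eq_abs]
  have hsum := hasSum_integral_iUnion hs hd hint
  rw [IntegrableOn, hrestrict] at hint
  rw [hrestrict] at hsum
  exact ⟨hint, hsum.unique (by simpa only [hpiece] using hI)⟩

/-- The factor `‖x‖ ^ β - ‖y‖ ^ β` vanishes where `‖x - y‖ = max ‖x‖ ‖y‖` may fail. -/
theorem IsUltrametricDist.rpow_sub_mul_norm_sub_rpow_eq_mul_max {E : Type*}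
    [SeminormedAddCommGroup E] [IsUltrametricDist E] (x y : E) (β γ : ℝ) :
    (‖x‖ ^ β - ‖y‖ ^ β) * ‖x - y‖ ^ γ = (‖x‖ ^ β - ‖y‖ ^ β) * max ‖x‖ ‖y‖ ^ γ := by
  rcases eq_or_ne ‖x‖ ‖y‖ with h | h
  · simp [h]
  · rw [show x - y = x + -y from sub_eq_add_neg x y,
      norm_add_eq_max_of_norm_ne_norm (by rwa [norm_neg]), norm_neg]

namespace Padic

variable {p : ℕ} [Fact p.Prime]

theorem sphere_zpow_eq_closedBall_sdiff (k : ℤ) :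
    sphere (0 : ℚ_[p]) ((p : ℝ) ^ k) =
      closedBall 0 ((p : ℝ) ^ k) \ closedBall 0 ((p : ℝ) ^ (k - 1)) := by
  rw [← closedBall_sdiff_ball]
  congr 1
  ext y
  simp [norm_lt_pow_iff_norm_le_pow_sub_one]

theorem iUnion_sphere_zpow : ⋃ k : ℤ, sphere (0 : ℚ_[p]) ((p : ℝ) ^ k) = {0}ᶜ := by
  ext y
  simp only [mem_iUnion, mem_sphere_zero_iff_norm, mem_compl_iff, mem_singleton_iff]
  refine ⟨fun ⟨k, hk⟩ hy => ?_, fun hy => ⟨_, norm_eq_zpow_neg_valuation hy⟩⟩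
  have : (0 : ℝ) < (p : ℝ) ^ k := zpow_pos (mod_cast (Fact.out : p.Prime).pos) k
  simp [hy] at hk
  linarith

theorem pairwise_disjoint_sphere_zpow :
    Pairwise (Disjoint on fun k : ℤ => sphere (0 : ℚ_[p]) ((p : ℝ) ^ k)) := by
  intro i j hij
  refine Set.disjoint_left.mpr fun y hi hj => hij ?_
  rw [mem_sphere_zero_iff_norm] at hi hj
  exact (zpow_right_strictMono₀ (mod_cast (Fact.out : p.Prime).one_lt)).injective
    (hi.symm.trans hj)

variable [MeasurableSpace ℚ_[p]] {m : Measure ℚ_[p]}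

theorem measure_sphere_zpow [BorelSpace ℚ_[p]]
    (hm : ∀ k : ℤ, m (closedBall 0 ((p : ℝ) ^ k)) = ENNReal.ofReal ((p : ℝ) ^ k))
    (k : ℤ) : m (sphere 0 ((p : ℝ) ^ k)) = ENNReal.ofReal ((p : ℝ) ^ k * (1 - (p : ℝ)⁻¹)) := by
  have hp : (0 : ℝ) < p := mod_cast (Fact.out : p.Prime).pos
  rw [sphere_zpow_eq_closedBall_sdiff, measure_sdiff (closedBall_subset_closedBall
      (zpow_le_zpow_right₀ (mod_cast (Fact.out : p.Prime).one_le) (by omega)))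
      measurableSet_closedBall.nullMeasurableSet (by simp [hm]), hm, hm,
    ← ENNReal.ofReal_sub _ (zpow_pos hp _).le, zpow_sub_one₀ hp.ne', mul_one_sub]

theorem measure_singleton_zero
    (hm : ∀ k : ℤ, m (closedBall 0 ((p : ℝ) ^ k)) = ENNReal.ofReal ((p : ℝ) ^ k)) :
    m {0} = 0 := by
  have hp : 1 < (p : ℝ) := mod_cast (Fact.out : p.Prime).one_lt
  have hball : ∀ n : ℕ, m {0} ≤ ENNReal.ofReal ((p : ℝ)⁻¹ ^ n) := fun n => by
    rw [inv_pow, ← zpow_natCast, ← zpow_neg, ← hm]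
    exact measure_mono (by simp)
  have hlim :
      Filter.Tendsto (fun n : ℕ => ENNReal.ofReal ((p : ℝ)⁻¹ ^ n)) Filter.atTop (nhds 0) := by
    simpa using ENNReal.tendsto_ofReal
      (tendsto_pow_atTop_nhds_zero_of_lt_one (by positivity) (inv_lt_one_of_one_lt₀ hp))
  exact nonpos_iff_eq_zero.mp (ge_of_tendsto' hlim hball)

theorem measureReal_sphere_zpow [BorelSpace ℚ_[p]]
    (hm : ∀ k : ℤ, m (closedBall 0 ((p : ℝ) ^ k)) = ENNReal.ofReal ((p : ℝ) ^ k))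
    (k : ℤ) : m.real (sphere 0 ((p : ℝ) ^ k)) = (p : ℝ) ^ k * (1 - (p : ℝ)⁻¹) := by
  have hp : 1 ≤ (p : ℝ) := mod_cast (Fact.out : p.Prime).one_le
  rw [measureReal_def, measure_sphere_zpow hm, ENNReal.toReal_ofReal (mul_nonneg
    (zpow_nonneg (zero_le_one.trans hp) k) (sub_nonneg.mpr (inv_le_one_of_one_le₀ hp)))]

end Padic

/-- The contribution of the sphere `‖y‖ = r ‖x‖` to the integral, divided by
`(1 - p⁻¹) ‖x‖ ^ (β - α)`. -/
noncomputable def shellTerm (α β r : ℝ) : ℝ :=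
  r * (1 - r ^ β) * max 1 r ^ (-(1 + α))

noncomputable def shellSum (q α β : ℝ) : ℝ :=
  (1 - q ^ (-α))⁻¹ - (1 - q ^ (β - α))⁻¹ +
    (q⁻¹ * (1 - q⁻¹)⁻¹ - q ^ (-(1 + β)) * (1 - q ^ (-(1 + β)))⁻¹)

theorem rpow_mul_shellTerm {t r : ℝ} (ht : 0 < t) (hr : 0 ≤ r) (α β : ℝ) :
    t ^ (β - α) * shellTerm α β r =
      t * r * ((t ^ β - (t * r) ^ β) * max t (t * r) ^ (-(1 + α))) := by
  have hmax : max t (t * r) = t * max 1 r := by rw [mul_max_of_nonneg _ _ ht.le, mul_one]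
  have hscale : t ^ (β - α) = t * t ^ β * t ^ (-(1 + α)) := by
    rw [show β - α = 1 + β + -(1 + α) by ring, rpow_add ht, rpow_add ht, rpow_one]
  rw [shellTerm, hmax, mul_rpow ht.le hr, mul_rpow ht.le (le_max_of_le_left zero_le_one), hscale]
  ring

theorem hasSum_shellTerm_zpow {q α β : ℝ} (hq : 1 < q) (hα : 0 < α) (hβ : -1 < β) (hβα : β < α) :
    HasSum (fun j : ℤ => shellTerm α β (q ^ j)) (shellSum q α β) := by
  have hq0 : 0 < q := zero_lt_one.trans hq
  have hratio : ∀ s : ℝ, s < 0 → 0 ≤ q ^ s ∧ q ^ s < 1 := fun s hs =>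
    ⟨rpow_nonneg hq0.le s, rpow_lt_one_of_one_lt_of_neg hq hs⟩
  have hgeom_succ : ∀ r : ℝ, 0 ≤ r → r < 1 → HasSum (fun n : ℕ => r ^ (n + 1)) (r * (1 - r)⁻¹) :=
    fun r hr0 hr1 => by simpa only [pow_succ'] using (hasSum_geometric_of_lt_one hr0 hr1).mul_left r
  obtain ⟨hα0, hα1⟩ := hratio _ (neg_lt_zero.mpr hα)
  obtain ⟨hβα0, hβα1⟩ := hratio _ (sub_neg.mpr hβα)
  obtain ⟨hβ0, hβ1⟩ := hratio (-(1 + β)) (by linarith)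
  refine HasSum.of_nat_of_neg_add_one
    (((hasSum_geometric_of_lt_one hα0 hα1).sub
      (hasSum_geometric_of_lt_one hβα0 hβα1)).congr_fun fun n => ?_)
    (((hgeom_succ _ (inv_nonneg.mpr hq0.le) (inv_lt_one_of_one_lt₀ hq)).sub
      (hgeom_succ _ hβ0 hβ1)).congr_fun fun n => ?_)
  · have hqn : 1 ≤ q ^ n := one_le_pow₀ hq.le
    have h1 : q ^ (-α) = q * q ^ (-(1 + α)) := by
      rw [show -α = 1 + -(1 + α) by ring, rpow_add hq0, rpow_one]
    have h2 : q ^ (β - α) = q * q ^ β * q ^ (-(1 + α)) := by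
      rw [show β - α = 1 + β + -(1 + α) by ring, rpow_add hq0, rpow_add hq0, rpow_one]
    rw [zpow_natCast, shellTerm, max_eq_right hqn, ← rpow_pow_comm hq0.le,
      ← rpow_pow_comm hq0.le, h1, h2]
    ring
  · have hqn : q ^ (-((n : ℤ) + 1)) = q⁻¹ ^ (n + 1) := by
      rw [← Nat.cast_succ, zpow_neg, zpow_natCast, inv_pow]
    have hle : q⁻¹ ^ (n + 1) ≤ 1 :=
      pow_le_one₀ (inv_nonneg.mpr hq0.le) (inv_le_one_of_one_le₀ hq.le)
    have h1 : q ^ (-(1 + β)) = q⁻¹ * q⁻¹ ^ β := by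
      rw [rpow_neg hq0.le, rpow_add hq0, rpow_one, mul_inv, inv_rpow hq0.le]
    rw [hqn, shellTerm, max_eq_left hle, one_rpow, ← rpow_pow_comm (inv_nonneg.mpr hq0.le), h1]
    ring

theorem gammaP_ratio_eq {p : ℕ} {α β : ℝ} (hp : 1 < (p : ℝ)) (hα : 0 < α) (hβ : -1 < β)
    (hβα : β < α) :
    -(1 / gammaP p (-α)) * ((1 - (p : ℝ)⁻¹) * shellSum p α β) =
      gammaP p (β + 1) / gammaP p (β + 1 - α) := by
  unfold gammaP shellSum
  set q : ℝ := (p : ℝ)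
  have hq0 : 0 < q := zero_lt_one.trans hp
  have hlt : ∀ s : ℝ, s < 0 → q ^ s < 1 := fun s hs => rpow_lt_one_of_one_lt_of_neg hp hs
  -- In `a, b, c` every power of `q` below is a monomial, and the claim becomes a rational identity.
  set a := q ^ (-α)
  set b := q ^ (β - α)
  set c := q⁻¹
  have e1 : q ^ (-α - 1) = a * c := by rw [rpow_sub hq0, rpow_one, div_eq_mul_inv]
  have e2 : q ^ (-(-α)) = a⁻¹ := rpow_neg hq0.le _
  have e3 : q ^ (β + 1 - 1) = b / a := by
    rw [show β + 1 - 1 = (β - α) - -α by ring, rpow_sub hq0]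
  have e4 : q ^ (-(β + 1)) = a * c / b := by
    rw [show -(β + 1) = (-α - 1) - (β - α) by ring, rpow_sub hq0, e1]
  have e5 : q ^ (-(1 + β)) = a * c / b := by rw [add_comm, e4]
  have e6 : q ^ (β + 1 - α - 1) = b := by rw [show β + 1 - α - 1 = β - α by ring]
  have e7 : q ^ (-(β + 1 - α)) = c / b := by
    rw [show -(β + 1 - α) = -1 - (β - α) by ring, rpow_sub hq0, rpow_neg_one]
  have ha0 : 0 < a := rpow_pos_of_pos hq0 _
  have hb0 : 0 < b := rpow_pos_of_pos hq0 _
  have ha1 : a < 1 := hlt _ (by linarith)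
  have hb1 : b < 1 := hlt _ (by linarith)
  have hc1 : c < 1 := inv_lt_one_of_one_lt₀ hp
  have hac : a * c < 1 := e1 ▸ hlt _ (by linarith)
  have hacb : a * c < b := (div_lt_one hb0).mp (e4 ▸ hlt _ (by linarith))
  rw [e1, e2, e3, e4, e5, e6, e7]
  have : 1 - a ≠ 0 := by linarith
  have : 1 - b ≠ 0 := by linarith
  have : 1 - c ≠ 0 := by linarith
  have : 1 - a * c ≠ 0 := by linarith
  have : b - a * c ≠ 0 := by linarith
  field_simp
  ring

theorem Dalpha_of_norm_rpow_general (p : ℕ) [Fact p.Prime]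
    [MeasurableSpace ℚ_[p]] [BorelSpace ℚ_[p]] (m : Measure ℚ_[p])
    (hm : ∀ (x : ℚ_[p]) (k : ℤ),
      m (Metric.closedBall x ((p : ℝ) ^ k)) = ENNReal.ofReal ((p : ℝ) ^ k))
    (α β : ℝ) (hα0 : 0 < α) (hβ1 : α - 1 < β) (hβ2 : β < α)
    (x : ℚ_[p]) (hx : x ≠ 0) :
    Integrable (fun y : ℚ_[p] => (‖x‖ ^ β - ‖y‖ ^ β) * ‖x - y‖ ^ (-(1 + α))) m ∧
    -(1 / gammaP p (-α)) *
        ∫ y : ℚ_[p], (‖x‖ ^ β - ‖y‖ ^ β) * ‖x - y‖ ^ (-(1 + α)) ∂m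
      = (gammaP p (β + 1) / gammaP p (β + 1 - α)) * ‖x‖ ^ (β - α) := by
  have hp : 1 < (p : ℝ) := mod_cast (Fact.out : p.Prime).one_lt
  have hβ : -1 < β := by linarith
  have hm0 := hm 0
  obtain ⟨n, hxn⟩ : ∃ n : ℤ, ‖x‖ = (p : ℝ) ^ n := ⟨_, Padic.norm_eq_zpow_neg_valuation hx⟩
  have hsum : HasSum (fun k : ℤ => m.real (sphere 0 ((p : ℝ) ^ k)) *
      ((‖x‖ ^ β - ((p : ℝ) ^ k) ^ β) * max ‖x‖ ((p : ℝ) ^ k) ^ (-(1 + α))))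
      ((1 - (p : ℝ)⁻¹) * ‖x‖ ^ (β - α) * shellSum p α β) := by
    rw [← (Equiv.addLeft n).hasSum_iff]
    refine ((hasSum_shellTerm_zpow hp hα0 hβ hβ2).mul_left _).congr_fun fun j => ?_
    rw [comp_apply, Equiv.coe_addLeft, Padic.measureReal_sphere_zpow hm0,
      zpow_add₀ (zero_lt_one.trans hp).ne', ← hxn, mul_assoc (1 - _),
      rpow_mul_shellTerm (norm_pos_iff.mpr hx) (zpow_nonneg (zero_le_one.trans hp.le) j)]
    ring
  refine (integrable_and_integral_eq_of_eqOn_const (fun _ => isClosed_sphere.measurableSet)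
    Padic.pairwise_disjoint_sphere_zpow ?_ ?_ ?_ hsum).imp_right fun hval => ?_
  · rw [Padic.iUnion_sphere_zpow]
    exact compl_mem_ae_iff.mpr (Padic.measure_singleton_zero hm0)
  · intro k
    rw [Padic.measure_sphere_zpow hm0]
    exact ENNReal.ofReal_ne_top
  · intro k y hy
    rw [← mem_sphere_zero_iff_norm.mp hy]
    exact IsUltrametricDist.rpow_sub_mul_norm_sub_rpow_eq_mul_max x y β _
  · rw [hval, ← gammaP_ratio_eq hp hα0 hβ hβ2]
    ring

/-- For `0 < α < 1` and `α - 1 < β < α`, the Taibleson–Vladimirov operator `𝔇^α`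
applied to `x ↦ ‖x‖_p^β` is, pointwise on `ℚ_p \ {0}`, given by
`(Γ_p(β+1)/Γ_p(β+1-α)) ‖x‖_p^{β-α}`; the defining integral converges absolutely. -/
theorem Dalpha_of_norm_rpow (p : ℕ) [Fact p.Prime]
    [MeasurableSpace ℚ_[p]] [BorelSpace ℚ_[p]] (m : Measure ℚ_[p])
    (hm : ∀ (x : ℚ_[p]) (k : ℤ),
      m (Metric.closedBall x ((p : ℝ) ^ k)) = ENNReal.ofReal ((p : ℝ) ^ k))
    (α β : ℝ) (hα0 : 0 < α) (hα1 : α < 1) (hβ1 : α - 1 < β) (hβ2 : β < α)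
    (x : ℚ_[p]) (hx : x ≠ 0) :
    Integrable (fun y : ℚ_[p] => (‖x‖ ^ β - ‖y‖ ^ β) * ‖x - y‖ ^ (-(1 + α))) m ∧
    -(1 / gammaP p (-α)) *
        ∫ y : ℚ_[p], (‖x‖ ^ β - ‖y‖ ^ β) * ‖x - y‖ ^ (-(1 + α)) ∂m
      = (gammaP p (β + 1) / gammaP p (β + 1 - α)) * ‖x‖ ^ (β - α) :=
  Dalpha_of_norm_rpow_general p m hm α β hα0 hβ1 hβ2 x hx
end

section
/- Let p be a prime and α > 0. Suppose f : ℚ_p → ℝ is locally constant with f(x) > 0 for all x, and for every x ∈ ℚ_p the integral ∫_{ℚ_p} |f(x)−f(y)| ‖x−y‖_p^{−(1+α)} dm(y) is finite, so that (𝔇^α f)(x) is defined pointwise. Let V : ℚ_p → ℝ be measurable and locally integrable with V(x) ≥ −(𝔇^α f)(x)/f(x) for m-almost every x. Then for every locally constant compactly supported function φ : ℚ_p → ℝ one has Q_α(φ) + ∫_{ℚ_p} V(x) φ(x)² dm(x) ≥ 0. -/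
/-!
Ground state representation: for `f > 0`,
`(φ x - φ y)² = φ x² / f x · (f x - f y) + φ y² / f y · (f y - f x)`
`  + f x f y (φ x / f x - φ y / f y)²`.
Integrating against the symmetric kernel `‖x - y‖ ^ (-(1 + α))` and dropping the last, non-negative
term gives `Q_α(φ) ≥ ∫ φ² / f · 𝔇^α f`, while the hypothesis on `V` gives
`∫ V φ² ≥ -∫ φ² / f · 𝔇^α f`.

The analytic work is integrability. A compactly supported locally constant `φ` is constant at all
scales below some `δ`, so the kernel only matters at distances `≥ δ`, where its integral is a
convergent geometric series over spheres. For locally constant `f`, the ultrametric inequality makes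
`x ↦ ∫ |f x - f y| ‖x - y‖ ^ (-(1 + α)) dy` locally constant, hence bounded on `supp φ`.
-/

open MeasureTheory

/-- The Taibleson–Vladimirov operator `𝔇^α`, pointwise:
`(𝔇^α f)(x) = -(1/Γ_p(-α)) ∫ (f(x)-f(y)) ‖x-y‖_p^{-(1+α)} dm(y)`. -/
noncomputable def Dop (p : ℕ) [Fact p.Prime] [MeasurableSpace ℚ_[p]]
    (m : Measure ℚ_[p]) (α : ℝ) (f : ℚ_[p] → ℝ) (x : ℚ_[p]) : ℝ :=
  -(1 / gammaP p (-α)) * ∫ y : ℚ_[p], (f x - f y) * ‖x - y‖ ^ (-(1 + α)) ∂m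

/-- The Dirichlet form `Q_α` of the Taibleson–Vladimirov operator `𝔇^α`. -/
noncomputable def Qform (p : ℕ) [Fact p.Prime] [MeasurableSpace ℚ_[p]]
    (m : Measure ℚ_[p]) (α : ℝ) (φ : ℚ_[p] → ℝ) : ℝ :=
  -(1 / (2 * gammaP p (-α))) *
    ∫ q : ℚ_[p] × ℚ_[p], (φ q.1 - φ q.2) ^ 2 * ‖q.1 - q.2‖ ^ (-(1 + α)) ∂(m.prod m)

open Metric Set
open scoped ENNReal

theorem two_mul_integral_le_integral_sq_sub_mul_kernel {X : Type*} [MeasurableSpace X]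
    {μ : Measure X} [SFinite μ] {k : X × X → ℝ} (hk : ∀ q, 0 ≤ k q)
    (hk_swap : ∀ q, k q.swap = k q) {f φ : X → ℝ} (hf : ∀ x, 0 < f x)
    (hG : Integrable (fun q => (φ q.1 - φ q.2) ^ 2 * k q) (μ.prod μ))
    (hB : Integrable (fun q => φ q.1 ^ 2 / f q.1 * ((f q.1 - f q.2) * k q)) (μ.prod μ)) :
    2 * ∫ x, φ x ^ 2 / f x * ∫ y, (f x - f y) * k (x, y) ∂μ ∂μ ≤
      ∫ q, (φ q.1 - φ q.2) ^ 2 * k q ∂(μ.prod μ) := by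
  set B : X × X → ℝ := fun q => φ q.1 ^ 2 / f q.1 * ((f q.1 - f q.2) * k q)
  have hground : ∀ q : X × X, (φ q.1 - φ q.2) ^ 2 * k q =
      B q + B q.swap + f q.1 * f q.2 * (φ q.1 / f q.1 - φ q.2 / f q.2) ^ 2 * k q := by
    intro q
    have h₁ := (hf q.1).ne'
    have h₂ := (hf q.2).ne'
    simp only [B, Prod.fst_swap, Prod.snd_swap, hk_swap]
    field_simp
    ring
  have hBswap : Integrable (fun q => B q.swap) (μ.prod μ) := hB.swap
  have hle : ∫ q, B q + B q.swap ∂(μ.prod μ) ≤ ∫ q, (φ q.1 - φ q.2) ^ 2 * k q ∂(μ.prod μ) := by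
    refine integral_mono (hB.add hBswap) hG fun q => ?_
    have := mul_pos (hf q.1) (hf q.2)
    have := hk q
    rw [hground q, le_add_iff_nonneg_right]
    positivity
  have hfubini : ∫ q, B q ∂(μ.prod μ) =
      ∫ x, φ x ^ 2 / f x * ∫ y, (f x - f y) * k (x, y) ∂μ ∂μ := by
    simp only [integral_prod B hB, B, integral_const_mul]
  rw [integral_add hB hBswap, integral_prod_swap B, hfubini] at hle
  linarith

theorem integrable_prod_mul_of_lintegral_enorm_le {α β : Type*} [MeasurableSpace α]
    [MeasurableSpace β] {μ : Measure α} {ν : Measure β} [SFinite ν] {g : α → ℝ}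
    (hg : Integrable g μ) {T : α × β → ℝ} (hT : AEStronglyMeasurable T (μ.prod ν)) {C : ℝ≥0∞}
    (hC : C ≠ ∞) (hTC : ∀ x, ∫⁻ y, ‖T (x, y)‖ₑ ∂ν ≤ C) :
    Integrable (fun q => g q.1 * T q) (μ.prod ν) := by
  refine ⟨hg.1.comp_fst.mul hT, ?_⟩
  calc ∫⁻ q, ‖g q.1 * T q‖ₑ ∂(μ.prod ν)
      ≤ ∫⁻ x, ∫⁻ y, ‖g x * T (x, y)‖ₑ ∂ν ∂μ := lintegral_prod_le _
    _ = ∫⁻ x, ‖g x‖ₑ * ∫⁻ y, ‖T (x, y)‖ₑ ∂ν ∂μ := by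
      simp only [enorm_mul, lintegral_const_mul' _ _ enorm_ne_top]
    _ ≤ ∫⁻ x, ‖g x‖ₑ * C ∂μ := lintegral_mono fun x => by gcongr; exact hTC x
    _ = (∫⁻ x, ‖g x‖ₑ ∂μ) * C := lintegral_mul_const' _ _ hC
    _ < ∞ := ENNReal.mul_lt_top hg.2 hC.lt_top

theorem IsLocallyConstant.exists_pos_forall_dist_lt_eq {X M : Type*} [PseudoMetricSpace X]
    [Zero M] {φ : X → M} (hφ : IsLocallyConstant φ) (hφc : HasCompactSupport φ) :
    ∃ δ > 0, ∀ x y, dist x y < δ → φ x = φ y := by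
  obtain ⟨δ, hδ, hcover⟩ := lebesgue_number_lemma_of_metric (c := fun v : M => φ ⁻¹' {v}) hφc
    (fun v => hφ {v}) fun x _ => mem_iUnion.2 ⟨φ x, rfl⟩
  have key : ∀ x ∈ tsupport φ, ∀ y, dist x y < δ → φ x = φ y := by
    intro x hx y hxy
    obtain ⟨v, hv⟩ := hcover x hx
    rw [hv (mem_ball_self hδ), hv (mem_ball'.2 hxy)]
  refine ⟨δ, hδ, fun x y hxy => ?_⟩
  by_cases hx : x ∈ tsupport φ
  · exact key x hx y hxy
  by_cases hy : y ∈ tsupport φ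
  · exact (key y hy x (dist_comm x y ▸ hxy)).symm
  rw [image_eq_zero_of_notMem_tsupport hx, image_eq_zero_of_notMem_tsupport hy]

section Ultrametric

variable {E : Type*} [SeminormedAddCommGroup E] [IsUltrametricDist E]

/-- On a ball where `f` is constant, `g (f x - f y)` does not depend on `x`, and for `y` outside
the ball all points `x` of the ball are at the same distance from `y`. -/
theorem IsLocallyConstant.comp_sub_mul_norm_sub {f : E → ℝ} (hf : IsLocallyConstant f)
    {g : ℝ → ℝ} (hg : g 0 = 0) (κ : ℝ → ℝ) :
    IsLocallyConstant fun x y => g (f x - f y) * κ ‖x - y‖ := by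
  rw [IsLocallyConstant.iff_eventually_eq]
  intro x₀
  obtain ⟨ε, hε, hball⟩ := isOpen_iff.1 (hf {f x₀}) x₀ rfl
  filter_upwards [ball_mem_nhds x₀ hε] with x hx
  funext y
  have hfx : f x = f x₀ := hball hx
  by_cases hy : y ∈ ball x₀ ε
  · have hfy : f y = f x₀ := hball hy
    simp [hfx, hfy, hg]
  have hlt : ‖x - x₀‖ < ‖x₀ - y‖ := by
    rw [mem_ball, dist_eq_norm] at hx
    rw [mem_ball', dist_eq_norm, not_lt] at hy
    exact hx.trans_le hy
  rw [hfx, IsUltrametricDist.norm_sub_eq_max_of_norm_sub_ne_norm_sub x x₀ y hlt.ne,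
    max_eq_right hlt.le]

variable [MeasurableSpace E] [BorelSpace E] [SecondCountableTopology E] {μ : Measure E}
  [IsFiniteMeasureOnCompacts μ] [SFinite μ]

theorem integrable_mul_sub_mul_norm_sub_rpow {ψ f : E → ℝ} (hψ : Continuous ψ)
    (hψc : HasCompactSupport ψ) (hf : IsLocallyConstant f) {s : ℝ}
    (hfint : ∀ x, Integrable (fun y => |f x - f y| * ‖x - y‖ ^ s) μ) :
    Integrable (fun q : E × E => ψ q.1 * ((f q.1 - f q.2) * ‖q.1 - q.2‖ ^ s)) (μ.prod μ) := by
  have hfc := hf.continuous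
  have hnorm : ∀ x y, ‖ψ x * ((f x - f y) * ‖x - y‖ ^ s)‖ =
      ‖ψ x‖ * (|f x - f y| * ‖x - y‖ ^ s) := fun x y => by
    rw [norm_mul, norm_mul, Real.norm_eq_abs (f x - f y),
      Real.norm_of_nonneg (Real.rpow_nonneg (norm_nonneg _) _)]
  refine (integrable_prod_iff (Measurable.aestronglyMeasurable (by fun_prop))).2
    ⟨ae_of_all _ fun x => ?_, ?_⟩
  · exact ((hfint x).const_mul ‖ψ x‖).mono' (Measurable.aestronglyMeasurable (by fun_prop))
      (ae_of_all _ fun y => (hnorm x y).le)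
  · simp only [hnorm, integral_const_mul]
    have hH := (hf.comp_sub_mul_norm_sub abs_zero fun t => t ^ s).comp fun F => ∫ y, F y ∂μ
    exact (hψ.norm.mul hH.continuous).integrable_of_hasCompactSupport hψc.norm.mul_right

end Ultrametric

theorem gammaP_neg_lt_zero {p : ℕ} (hp : 1 < p) {α : ℝ} (hα : 0 < α) : gammaP p (-α) < 0 := by
  have hp' : (1 : ℝ) < p := by exact_mod_cast hp
  refine div_neg_of_pos_of_neg ?_ ?_
  · linarith [Real.rpow_lt_one_of_one_lt_of_neg hp' (by linarith : -α - 1 < 0)]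
  · linarith [Real.one_lt_rpow hp' (by linarith : 0 < -(-α))]

namespace Padic

variable {p : ℕ} [Fact p.Prime]

theorem setOf_zpow_le_norm_sub_eq_iUnion (x : ℚ_[p]) (N : ℤ) :
    {y | (p : ℝ) ^ N ≤ ‖x - y‖} = ⋃ i : ℕ, {y | ‖x - y‖ = (p : ℝ) ^ (N + i)} := by
  have hp : (1 : ℝ) < p := by exact_mod_cast (Fact.out : p.Prime).one_lt
  ext y
  simp only [mem_ofPred_eq, mem_iUnion]
  constructor
  · intro h
    have hxy : x - y ≠ 0 := norm_pos_iff.1 ((zpow_pos (by linarith) N).trans_le h)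
    rw [norm_eq_zpow_neg_valuation hxy] at h ⊢
    have := (zpow_le_zpow_iff_right₀ hp).1 h
    exact ⟨(-(x - y).valuation - N).toNat, by congr 1; omega⟩
  · rintro ⟨i, hi⟩
    rw [hi]
    exact zpow_le_zpow_right₀ hp.le (by omega)

variable [MeasurableSpace ℚ_[p]] {m : Measure ℚ_[p]}

theorem isLocallyFiniteMeasure_of_measure_closedBall_le
    (hm : ∀ (x : ℚ_[p]) (k : ℤ), m (closedBall x ((p : ℝ) ^ k)) ≤ ENNReal.ofReal ((p : ℝ) ^ k)) :
    IsLocallyFiniteMeasure m :=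
  ⟨fun x => ⟨closedBall x ((p : ℝ) ^ (0 : ℤ)), closedBall_mem_nhds x (by simp),
    (hm x 0).trans_lt ENNReal.ofReal_lt_top⟩⟩

variable [BorelSpace ℚ_[p]]

theorem lintegral_zpow_le_norm_sub_rpow_le
    (hm : ∀ (x : ℚ_[p]) (k : ℤ), m (closedBall x ((p : ℝ) ^ k)) ≤ ENNReal.ofReal ((p : ℝ) ^ k))
    {α : ℝ} (hα : 0 < α) (N : ℤ) (x : ℚ_[p]) :
    ∫⁻ y in {y | (p : ℝ) ^ N ≤ ‖x - y‖}, ENNReal.ofReal (‖x - y‖ ^ (-(1 + α))) ∂m ≤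
      ENNReal.ofReal (((p : ℝ) ^ (-α)) ^ N * (1 - (p : ℝ) ^ (-α))⁻¹) := by
  have hp : (1 : ℝ) < p := by exact_mod_cast (Fact.out : p.Prime).one_lt
  have hp0 : (0 : ℝ) < p := by linarith
  set r := (p : ℝ) ^ (-α)
  have hr0 : 0 ≤ r := Real.rpow_nonneg hp0.le _
  have hr1 : r < 1 := Real.rpow_lt_one_of_one_lt_of_neg hp (by linarith)
  set S : ℕ → Set ℚ_[p] := fun i => {y | ‖x - y‖ = (p : ℝ) ^ (N + i)}
  have hS_meas : ∀ i, MeasurableSet (S i) := fun i =>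
    (isClosed_eq (by fun_prop) continuous_const).measurableSet
  have hS_disj : Pairwise (Function.onFun Disjoint S) := by
    intro i j hij
    refine Set.disjoint_left.2 fun y hyi hyj => hij ?_
    have := zpow_right_injective₀ hp0 hp.ne' ((hyi : _ = _).symm.trans hyj)
    omega
  have hpow : ∀ j : ℤ, ((p : ℝ) ^ j) ^ (-(1 + α)) * (p : ℝ) ^ j = r ^ j := fun j => by
    rw [← Real.rpow_intCast, ← Real.rpow_intCast r, ← Real.rpow_mul hp0.le,
      ← Real.rpow_mul hp0.le, ← Real.rpow_add hp0]
    ring_nf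
  have hshell : ∀ i : ℕ, ∫⁻ y in S i, ENNReal.ofReal (‖x - y‖ ^ (-(1 + α))) ∂m ≤
      ENNReal.ofReal (r ^ N * r ^ i) := by
    intro i
    set R := (p : ℝ) ^ (N + i)
    have hsub : S i ⊆ closedBall x R := fun y (hy : _ = _) => by
      rw [mem_closedBall, dist_eq_norm, norm_sub_rev, hy]
    have hR : R ^ (-(1 + α)) * R = r ^ N * r ^ i :=
      (hpow _).trans (by rw [zpow_add₀ (by positivity), zpow_natCast])
    calc ∫⁻ y in S i, ENNReal.ofReal (‖x - y‖ ^ (-(1 + α))) ∂m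
        = ∫⁻ y in S i, ENNReal.ofReal (R ^ (-(1 + α))) ∂m :=
          setLIntegral_congr_fun (hS_meas i) fun y (hy : _ = _) => by rw [hy]
      _ = ENNReal.ofReal (R ^ (-(1 + α))) * m (S i) := setLIntegral_const _ _
      _ ≤ ENNReal.ofReal (R ^ (-(1 + α))) * ENNReal.ofReal R := by
          gcongr; exact (measure_mono hsub).trans (hm x _)
      _ = ENNReal.ofReal (r ^ N * r ^ i) := by
          rw [← ENNReal.ofReal_mul (Real.rpow_nonneg (zpow_nonneg hp0.le _) _), hR]
  calc ∫⁻ y in {y | (p : ℝ) ^ N ≤ ‖x - y‖}, ENNReal.ofReal (‖x - y‖ ^ (-(1 + α))) ∂m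
      = ∑' i, ∫⁻ y in S i, ENNReal.ofReal (‖x - y‖ ^ (-(1 + α))) ∂m := by
        rw [setOf_zpow_le_norm_sub_eq_iUnion, lintegral_iUnion hS_meas hS_disj]
    _ ≤ ∑' i : ℕ, ENNReal.ofReal (r ^ N * r ^ i) := ENNReal.tsum_le_tsum hshell
    _ = ENNReal.ofReal (r ^ N * (1 - r)⁻¹) := by
        rw [← ENNReal.ofReal_tsum_of_nonneg (fun i => by positivity)
          ((summable_geometric_of_lt_one hr0 hr1).mul_left _), tsum_mul_left,
          tsum_geometric_of_lt_one hr0 hr1]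

theorem integrable_mul_indicator_norm_sub_rpow [SFinite m]
    (hm : ∀ (x : ℚ_[p]) (k : ℤ), m (closedBall x ((p : ℝ) ^ k)) ≤ ENNReal.ofReal ((p : ℝ) ^ k))
    {α : ℝ} (hα : 0 < α) {g : ℚ_[p] → ℝ} (hg : Integrable g m) {δ : ℝ} (hδ : 0 < δ) :
    Integrable (fun q : ℚ_[p] × ℚ_[p] =>
      g q.1 * {q | δ ≤ ‖q.1 - q.2‖}.indicator (fun q => ‖q.1 - q.2‖ ^ (-(1 + α))) q)
      (m.prod m) := by
  have hp : (1 : ℝ) < p := by exact_mod_cast (Fact.out : p.Prime).one_lt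
  obtain ⟨n, hn⟩ := exists_pow_lt_of_lt_one hδ (inv_lt_one_of_one_lt₀ hp)
  have hN : (p : ℝ) ^ (-n : ℤ) ≤ δ := by simpa [zpow_neg, inv_pow] using hn.le
  refine integrable_prod_mul_of_lintegral_enorm_le hg
    ((Measurable.pow_const (by fun_prop) _).indicator
      (measurableSet_le (by fun_prop) (by fun_prop))).aestronglyMeasurable
    (C := ENNReal.ofReal (((p : ℝ) ^ (-α)) ^ (-n : ℤ) * (1 - (p : ℝ) ^ (-α))⁻¹))
    ENNReal.ofReal_ne_top fun x => ?_
  calc ∫⁻ y, ‖{q : ℚ_[p] × ℚ_[p] | δ ≤ ‖q.1 - q.2‖}.indicator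
        (fun q => ‖q.1 - q.2‖ ^ (-(1 + α))) (x, y)‖ₑ ∂m
      = ∫⁻ y in {y | δ ≤ ‖x - y‖}, ENNReal.ofReal (‖x - y‖ ^ (-(1 + α))) ∂m := by
        rw [← lintegral_indicator (measurableSet_le (by fun_prop) (by fun_prop))]
        congr 1 with y
        by_cases hy : δ ≤ ‖x - y‖
        · simp [hy, Real.enorm_eq_ofReal (Real.rpow_nonneg (norm_nonneg _) _)]
        · simp [hy]
    _ ≤ ∫⁻ y in {y | (p : ℝ) ^ (-n : ℤ) ≤ ‖x - y‖}, ENNReal.ofReal (‖x - y‖ ^ (-(1 + α))) ∂m :=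
        lintegral_mono_set fun y (hy : δ ≤ _) => hN.trans hy
    _ ≤ _ := lintegral_zpow_le_norm_sub_rpow_le hm hα _ x

theorem integrable_sq_sub_mul_norm_sub_rpow [IsFiniteMeasureOnCompacts m]
    (hm : ∀ (x : ℚ_[p]) (k : ℤ), m (closedBall x ((p : ℝ) ^ k)) ≤ ENNReal.ofReal ((p : ℝ) ^ k))
    {α : ℝ} (hα : 0 < α) {φ : ℚ_[p] → ℝ} (hφ : IsLocallyConstant φ)
    (hφc : HasCompactSupport φ) :
    Integrable (fun q : ℚ_[p] × ℚ_[p] => (φ q.1 - φ q.2) ^ 2 * ‖q.1 - q.2‖ ^ (-(1 + α)))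
      (m.prod m) := by
  obtain ⟨δ, hδ, hφδ⟩ := hφ.exists_pos_forall_dist_lt_eq hφc
  set T : ℚ_[p] × ℚ_[p] → ℝ :=
    {q | δ ≤ ‖q.1 - q.2‖}.indicator fun q => ‖q.1 - q.2‖ ^ (-(1 + α))
  have hφ2 : Integrable (fun x => φ x ^ 2) m :=
    (hφ.continuous.pow 2).integrable_of_hasCompactSupport
      (hφc.mono fun x hx hφx => hx (by simp [hφx]))
  have h₁ : Integrable (fun q : ℚ_[p] × ℚ_[p] => φ q.1 ^ 2 * T q) (m.prod m) :=
    integrable_mul_indicator_norm_sub_rpow hm hα hφ2 hδ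
  have h₂ : Integrable (fun q : ℚ_[p] × ℚ_[p] => φ q.2 ^ 2 * T q) (m.prod m) := by
    refine h₁.swap.congr (ae_of_all _ fun q => ?_)
    simp only [Function.comp_apply, Prod.fst_swap, Prod.snd_swap, T, indicator, mem_ofPred_eq,
      norm_sub_rev]
  have := hφ.continuous
  refine ((h₁.add h₂).const_mul 2).mono' (Measurable.aestronglyMeasurable (by fun_prop))
    (ae_of_all _ fun q => ?_)
  have hk : 0 ≤ ‖q.1 - q.2‖ ^ (-(1 + α)) := by positivity
  rw [Real.norm_of_nonneg (by positivity), Pi.add_apply]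
  by_cases hq : φ q.1 = φ q.2
  · have hT : 0 ≤ T q := indicator_nonneg (fun _ _ => hk) q
    rw [hq, sub_self]
    nlinarith [sq_nonneg (φ q.2), mul_nonneg (sq_nonneg (φ q.1)) hT]
  have hT : T q = ‖q.1 - q.2‖ ^ (-(1 + α)) :=
    indicator_of_mem (s := {q | δ ≤ _}) (not_lt.1 fun h => hq (hφδ _ _ (by rwa [dist_eq_norm]))) _
  rw [hT]
  nlinarith [sq_nonneg (φ q.1 + φ q.2)]

end Padic

theorem integral_div_mul_Dop_le_Qform {p : ℕ} [Fact p.Prime] [MeasurableSpace ℚ_[p]]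
    [BorelSpace ℚ_[p]] {m : Measure ℚ_[p]} [IsFiniteMeasureOnCompacts m]
    (hm : ∀ (x : ℚ_[p]) (k : ℤ), m (closedBall x ((p : ℝ) ^ k)) ≤ ENNReal.ofReal ((p : ℝ) ^ k))
    {α : ℝ} (hα : 0 < α) {f : ℚ_[p] → ℝ} (hfl : IsLocallyConstant f) (hfpos : ∀ x, 0 < f x)
    (hfint : ∀ x, Integrable (fun y => |f x - f y| * ‖x - y‖ ^ (-(1 + α))) m)
    {φ : ℚ_[p] → ℝ} (hφ : IsLocallyConstant φ) (hφc : HasCompactSupport φ) :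
    ∫ x, φ x ^ 2 / f x * Dop p m α f x ∂m ≤ Qform p m α φ := by
  have hw : 0 < -(1 / gammaP p (-α)) :=
    neg_pos.2 (one_div_neg.2 (gammaP_neg_lt_zero (Fact.out : p.Prime).one_lt hα))
  have hψ : IsLocallyConstant fun x => φ x ^ 2 / f x := hφ.comp₂ hfl fun a b => a ^ 2 / b
  have hψc : HasCompactSupport fun x => φ x ^ 2 / f x :=
    hφc.mono fun x hx hφx => hx (by simp [hφx])
  have key := two_mul_integral_le_integral_sq_sub_mul_kernel
    (k := fun q : ℚ_[p] × ℚ_[p] => ‖q.1 - q.2‖ ^ (-(1 + α))) (fun q => by positivity)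
    (fun q => by simp only [Prod.fst_swap, Prod.snd_swap, norm_sub_rev]) hfpos
    (Padic.integrable_sq_sub_mul_norm_sub_rpow hm hα hφ hφc)
    (integrable_mul_sub_mul_norm_sub_rpow hψ.continuous hψc hfl hfint)
  unfold Dop Qform
  calc ∫ x, φ x ^ 2 / f x *
        (-(1 / gammaP p (-α)) * ∫ y, (f x - f y) * ‖x - y‖ ^ (-(1 + α)) ∂m) ∂m
      = -(1 / gammaP p (-α)) *
          ∫ x, φ x ^ 2 / f x * ∫ y, (f x - f y) * ‖x - y‖ ^ (-(1 + α)) ∂m ∂m := by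
        rw [← integral_const_mul]; congr 1 with x; ring
    _ ≤ -(1 / gammaP p (-α)) * ((∫ q : ℚ_[p] × ℚ_[p],
          (φ q.1 - φ q.2) ^ 2 * ‖q.1 - q.2‖ ^ (-(1 + α)) ∂(m.prod m)) / 2) := by
        gcongr; linarith
    _ = _ := by ring

theorem schroedinger_form_nonneg_of_supersolution_general (p : ℕ) [Fact p.Prime]
    [MeasurableSpace ℚ_[p]] [BorelSpace ℚ_[p]] (m : Measure ℚ_[p])
    (hm : ∀ (x : ℚ_[p]) (k : ℤ),
      m (Metric.closedBall x ((p : ℝ) ^ k)) = ENNReal.ofReal ((p : ℝ) ^ k))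
    (α : ℝ) (hα0 : 0 < α)
    (f : ℚ_[p] → ℝ) (hfl : IsLocallyConstant f) (hfpos : ∀ x, 0 < f x)
    (hfint : ∀ x : ℚ_[p],
      Integrable (fun y : ℚ_[p] => |f x - f y| * ‖x - y‖ ^ (-(1 + α))) m)
    (V : ℚ_[p] → ℝ) (hVloc : LocallyIntegrable V m)
    (hV : ∀ᵐ x ∂m, V x ≥ -(Dop p m α f x) / f x)
    (φ : ℚ_[p] → ℝ) (hφ : IsLocallyConstant φ) (hφc : HasCompactSupport φ) :
    0 ≤ Qform p m α φ + ∫ x : ℚ_[p], V x * φ x ^ 2 ∂m := by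
  have hm_le x k := (hm x k).le
  have := Padic.isLocallyFiniteMeasure_of_measure_closedBall_le hm_le
  have hDop : IsLocallyConstant (Dop p m α f) :=
    (hfl.comp_sub_mul_norm_sub (g := id) rfl fun t => t ^ (-(1 + α))).comp
      fun F => -(1 / gammaP p (-α)) * ∫ y, F y ∂m
  have hφ2c : HasCompactSupport fun x => φ x ^ 2 := hφc.mono fun x hx hφx => hx (by simp [hφx])
  have hVφ : Integrable (fun x => V x * φ x ^ 2) m :=
    hVloc.integrable_smul_right_of_hasCompactSupport (hφ.continuous.pow 2) hφ2c
  have hDφ : Integrable (fun x => -(Dop p m α f x) / f x * φ x ^ 2) m :=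
    ((hDop.comp₂ hfl fun a b => -a / b).continuous.mul (hφ.continuous.pow 2))
      |>.integrable_of_hasCompactSupport hφ2c.mul_left
  have hVφ_ge := integral_mono_ae hDφ hVφ
    (hV.mono fun x hx => mul_le_mul_of_nonneg_right hx (sq_nonneg (φ x)))
  have hneg : ∫ x, -(Dop p m α f x) / f x * φ x ^ 2 ∂m =
      -∫ x, φ x ^ 2 / f x * Dop p m α f x ∂m := by
    rw [← integral_neg]; congr 1 with x; ring
  linarith [integral_div_mul_Dop_le_Qform hm_le hα0 hfl hfpos hfint hφ hφc]

/-- Allegretto–Piepenbrink-type criterion: if there is a positive locally constant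
function `f` with `(𝔇^α f)(x)` defined pointwise such that `V ≥ -(𝔇^α f)/f` a.e.,
then the Schrödinger form `Q_α + ∫ V φ²` is non-negative on test functions. -/
theorem schroedinger_form_nonneg_of_supersolution (p : ℕ) [Fact p.Prime]
    [MeasurableSpace ℚ_[p]] [BorelSpace ℚ_[p]] (m : Measure ℚ_[p])
    (hm : ∀ (x : ℚ_[p]) (k : ℤ),
      m (Metric.closedBall x ((p : ℝ) ^ k)) = ENNReal.ofReal ((p : ℝ) ^ k))
    (α : ℝ) (hα0 : 0 < α)
    (f : ℚ_[p] → ℝ) (hfl : IsLocallyConstant f) (hfpos : ∀ x, 0 < f x)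
    (hfint : ∀ x : ℚ_[p],
      Integrable (fun y : ℚ_[p] => |f x - f y| * ‖x - y‖ ^ (-(1 + α))) m)
    (V : ℚ_[p] → ℝ) (hVmeas : Measurable V) (hVloc : LocallyIntegrable V m)
    (hV : ∀ᵐ x ∂m, V x ≥ -(Dop p m α f x) / f x)
    (φ : ℚ_[p] → ℝ) (hφ : IsLocallyConstant φ) (hφc : HasCompactSupport φ) :
    0 ≤ Qform p m α φ + ∫ x : ℚ_[p], V x * φ x ^ 2 ∂m :=
  schroedinger_form_nonneg_of_supersolution_general p m hm α hα0 f hfl hfpos hfint V hVloc hV φ hφ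
    hφc
end

section
/- Let p be a prime and 0 < α < 1. Then for every real b > 0 there exists β with 0 < β < α such that −Γ_p(β+1)/Γ_p(β+1−α) = b. -/
/-!
On `[0, α)` the arguments `β + 1` and `β + 1 - α` avoid `0`, where the denominator of `Γ_p`
vanishes, and `β + 1 - α ∈ (0, 1)`, where `Γ_p > 0`; so `β ↦ -Γ_p(β+1)/Γ_p(β+1-α)` is continuous
there. It vanishes at `β = 0` because `Γ_p(1) = 0`, and tends to `+∞` as `β → α⁻`, since
`Γ_p(β+1) → Γ_p(α+1) < 0` while `Γ_p(β+1-α) → Γ_p(1) = 0` from above. The intermediate value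
theorem then produces `β`.
-/

open Real Set Filter Topology

section GammaP

variable {p : ℕ} {z α : ℝ}

lemma gammaP_one (p : ℕ) : gammaP p 1 = 0 := by
  simp [gammaP]

lemma continuousAt_gammaP (hp : 1 < p) (hz : z ≠ 0) : ContinuousAt (gammaP p) z := by
  have hp' : (1 : ℝ) < p := Nat.one_lt_cast.2 hp
  have hp0 : (p : ℝ) ≠ 0 := by positivity
  have hden : 1 - (p : ℝ) ^ (-z) ≠ 0 := by
    rw [sub_ne_zero, ne_comm]
    rcases hz.lt_or_gt with hz | hz
    · exact (one_lt_rpow hp' (neg_pos.2 hz)).ne'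
    · exact (rpow_lt_one_of_one_lt_of_neg hp' (neg_neg_of_pos hz)).ne
  exact (continuousAt_const.sub ((continuousAt_const_rpow hp0).comp
    (continuousAt_id.sub continuousAt_const))).div
    (continuousAt_const.sub ((continuousAt_const_rpow hp0).comp continuousAt_id.neg)) hden

lemma gammaP_pos (hp : 1 < p) (h0 : 0 < z) (h1 : z < 1) : 0 < gammaP p z := by
  have hp' : (1 : ℝ) < p := Nat.one_lt_cast.2 hp
  exact div_pos (sub_pos.2 (rpow_lt_one_of_one_lt_of_neg hp' (by linarith)))
    (sub_pos.2 (rpow_lt_one_of_one_lt_of_neg hp' (by linarith)))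

lemma gammaP_neg (hp : 1 < p) (h1 : 1 < z) : gammaP p z < 0 := by
  have hp' : (1 : ℝ) < p := Nat.one_lt_cast.2 hp
  exact div_neg_of_neg_of_pos (sub_neg.2 (one_lt_rpow hp' (by linarith)))
    (sub_pos.2 (rpow_lt_one_of_one_lt_of_neg hp' (by linarith)))

lemma tendsto_gammaP_nhdsLT_one (hp : 1 < p) : Tendsto (gammaP p) (𝓝[<] 1) (𝓝[>] 0) := by
  refine tendsto_nhdsWithin_iff.2 ⟨?_, ?_⟩
  · simpa [gammaP_one] using
      (continuousAt_gammaP hp one_ne_zero).tendsto.mono_left nhdsWithin_le_nhds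
  · filter_upwards [Ioo_mem_nhdsLT zero_lt_one] with z hz using gammaP_pos hp hz.1 hz.2

lemma continuousOn_neg_gammaP_div (hp : 1 < p) (hα1 : α < 1) :
    ContinuousOn (fun β => -(gammaP p (β + 1) / gammaP p (β + 1 - α))) (Ico 0 α) := by
  intro β ⟨hβ0, hβα⟩
  have hnum : ContinuousAt (fun β => gammaP p (β + 1)) β :=
    (continuousAt_gammaP hp (by linarith)).comp' (by fun_prop)
  have hden : ContinuousAt (fun β => gammaP p (β + 1 - α)) β :=
    (continuousAt_gammaP hp (by linarith)).comp' (by fun_prop)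
  exact (hnum.div hden (gammaP_pos hp (by linarith) (by linarith)).ne').neg.continuousWithinAt

lemma tendsto_neg_gammaP_div_atTop (hp : 1 < p) (hα0 : 0 < α) :
    Tendsto (fun β => -(gammaP p (β + 1) / gammaP p (β + 1 - α))) (𝓝[<] α) atTop := by
  have hnum : Tendsto (fun β => -gammaP p (β + 1)) (𝓝[<] α) (𝓝 (-gammaP p (α + 1))) :=
    (((continuousAt_gammaP hp (by linarith)).comp' (f := fun β => β + 1)
      (by fun_prop)).tendsto.mono_left nhdsWithin_le_nhds).neg
  have hshift : Tendsto (fun β => β + 1 - α) (𝓝[<] α) (𝓝[<] 1) := by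
    refine tendsto_nhdsWithin_iff.2 ⟨?_, ?_⟩
    · have : Continuous fun β : ℝ => β + 1 - α := by fun_prop
      exact (this.tendsto' α 1 (by ring)).mono_left nhdsWithin_le_nhds
    · filter_upwards [self_mem_nhdsWithin] with β (hβ : β < α)
      exact show β + 1 - α < 1 by linarith
  have hden := ((tendsto_gammaP_nhdsLT_one hp).comp hshift).inv_tendsto_nhdsGT_zero
  simpa [neg_div, div_eq_mul_inv] using
    hnum.pos_mul_atTop (neg_pos.2 (gammaP_neg hp (by linarith))) hden

end GammaP

/-- For `0 < α < 1` and every `b > 0` there exists `0 < β < α` with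
`-Γ_p(β+1)/Γ_p(β+1-α) = b`. -/
theorem exists_beta_pos (p : ℕ) (hp : p.Prime) (α : ℝ) (hα0 : 0 < α) (hα1 : α < 1)
    (b : ℝ) (hb : 0 < b) :
    ∃ β : ℝ, 0 < β ∧ β < α ∧ -(gammaP p (β + 1) / gammaP p (β + 1 - α)) = b := by
  have hsurj := isPreconnected_Ico.intermediate_value_Ici (left_mem_Ico.2 hα0)
    (le_principal_iff.2 (Ico_mem_nhdsLT hα0)) (continuousOn_neg_gammaP_div hp.one_lt hα1)
    (tendsto_neg_gammaP_div_atTop hp.one_lt hα0)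
  obtain ⟨β, ⟨hβ0, hβα⟩, hβ⟩ := hsurj (show b ∈ Ici _ by simp [gammaP_one, hb.le])
  refine ⟨β, hβ0.lt_of_ne ?_, hβα, hβ⟩
  rintro rfl
  simp [gammaP_one] at hβ
  linarith
end

section
/- Let p be a prime, 0 < α < 1, and set b_* := −(Γ_p((1+α)/2))². Then: (i) for every β with α−1 < β < 0 one has b_* ≤ −Γ_p(β+1)/Γ_p(β+1−α) < 0; and (ii) for every real b with b_* ≤ b < 0 there exist β₁ with α−1 < β₁ ≤ (α−1)/2 and β₂ with (α−1)/2 ≤ β₂ < 0 such that −Γ_p(β_i+1)/Γ_p(β_i+1−α) = b for i = 1, 2. -/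
open Real Set

lemma gammaP_eq (p : ℕ) (hp : p ≠ 0) (z : ℝ) :
    gammaP p z = (p - p ^ z) * p ^ z / (p * (p ^ z - 1)) := by
  have hP : (0 : ℝ) < p := by positivity
  have hu : (0 : ℝ) < (p : ℝ) ^ z := rpow_pos_of_pos hP z
  rw [gammaP, rpow_sub_one hP.ne', rpow_neg hP.le]
  field_simp

lemma gammaP_one_sub (p : ℕ) (z : ℝ) : gammaP p (1 - z) = (gammaP p z)⁻¹ := by
  rw [gammaP, gammaP, inv_div, sub_sub_cancel_left, neg_sub]

noncomputable def negGammaPRatio (P a u : ℝ) : ℝ :=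
  -(a * (P - u) * (u - a)) / ((u - 1) * (P * a - u))

lemma neg_gammaP_div_gammaP_sub (p : ℕ) (hp : p ≠ 0) (z α : ℝ) :
    -(gammaP p z / gammaP p (z - α)) = negGammaPRatio p ((p : ℝ) ^ α) ((p : ℝ) ^ z) := by
  have hP : (0 : ℝ) < p := by positivity
  have hu : (0 : ℝ) < (p : ℝ) ^ z := rpow_pos_of_pos hP z
  have ha : (0 : ℝ) < (p : ℝ) ^ α := rpow_pos_of_pos hP α
  rw [gammaP_eq p hp, gammaP_eq p hp, rpow_sub hP, negGammaPRatio]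
  set P : ℝ := (p : ℝ)
  set u := P ^ z
  set a := P ^ α
  -- the degenerate cases, where both sides are junk `0` by the convention `x / 0 = 0`
  rcases eq_or_ne (u - 1) 0 with h1 | h1
  · simp [h1]
  rcases eq_or_ne (u - a) 0 with h2 | h2
  · rw [sub_eq_zero.mp h2]; simp [ha.ne']
  rcases eq_or_ne (P * a - u) 0 with h3 | h3
  · rw [← sub_eq_zero.mp h3]; field_simp
  field_simp

lemma neg_sq_gammaP_eq (p : ℕ) (hp : p ≠ 0) (α : ℝ) :
    -(gammaP p ((1 + α) / 2)) ^ 2 =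
      negGammaPRatio p ((p : ℝ) ^ α) ((p : ℝ) ^ ((1 + α) / 2)) := by
  rw [← neg_gammaP_div_gammaP_sub p hp, show (1 + α) / 2 - α = 1 - (1 + α) / 2 by ring,
    gammaP_one_sub, div_inv_eq_mul, sq]

section
variable {P a u : ℝ}

lemma negGammaPRatio_left : negGammaPRatio P a a = 0 := by simp [negGammaPRatio]

lemma negGammaPRatio_right : negGammaPRatio P a P = 0 := by simp [negGammaPRatio]

lemma negGammaPRatio_neg (ha : 1 < a) (hau : a < u) (huP : u < P) :
    negGammaPRatio P a u < 0 := by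
  have hPa : u < P * a := by nlinarith
  refine div_neg_of_neg_of_pos ?_ (mul_pos (by linarith) (by linarith))
  have : 0 < a * (P - u) * (u - a) := mul_pos (mul_pos (by linarith) (by linarith)) (by linarith)
  linarith

lemma negGammaPRatio_le {m : ℝ} (hP : 1 ≤ P) (ha : 1 ≤ a) (hm0 : 0 < m) (hm : m ^ 2 = P * a)
    (hu1 : 1 < u) (hu : u < P * a) : negGammaPRatio P a m ≤ negGammaPRatio P a u := by
  have hm1 : 1 < m := by nlinarith
  have hmPa : m < P * a := by nlinarith
  rw [negGammaPRatio, negGammaPRatio, neg_div, neg_div, neg_le_neg_iff,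
    div_le_div_iff₀ (mul_pos (by linarith) (by linarith)) (mul_pos (by linarith) (by linarith))]
  have key : a * (P - m) * (m - a) * ((u - 1) * (P * a - u)) -
      a * (P - u) * (u - a) * ((m - 1) * (P * a - m)) =
      a * (P - 1) * (a - 1) * m * (u - m) ^ 2 := by
    linear_combination (a * (P - 1) * (a - 1) * (u - m)) * hm
  have hP1 : 0 ≤ P - 1 := by linarith
  have ha1 : 0 ≤ a - 1 := by linarith
  have : 0 ≤ a * (P - 1) * (a - 1) * m * (u - m) ^ 2 := by positivity
  linarith

lemma continuousOn_negGammaPRatio {l r : ℝ} (hl : 1 < l) (hr : r < P * a) :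
    ContinuousOn (negGammaPRatio P a) (Icc l r) := by
  refine ContinuousOn.div (by fun_prop) (by fun_prop) fun u hu => ?_
  exact mul_ne_zero (by linarith [hu.1]) (by linarith [hu.2])

end

section
variable {P α : ℝ}

lemma continuousOn_negGammaPRatio_rpow (hP : 1 < P) (hα : 0 < α) :
    ContinuousOn (fun β => negGammaPRatio P (P ^ α) (P ^ (β + 1))) (Icc (α - 1) 0) := by
  have hPα : P < P * P ^ α := lt_mul_right (by linarith) (one_lt_rpow hP hα)
  refine (continuousOn_negGammaPRatio (one_lt_rpow hP hα) hPα).comp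
    ((continuous_const_rpow (by positivity)).comp (continuous_add_const 1)).continuousOn
    fun β hβ => ?_
  constructor
  · simpa using rpow_le_rpow_of_exponent_le hP.le (by linarith [hβ.1] : α ≤ β + 1)
  · simpa using rpow_le_rpow_of_exponent_le hP.le (by linarith [hβ.2] : β + 1 ≤ 1)

lemma negGammaPRatio_rpow_bounds (hP : 1 < P) (hα : 0 < α) {β : ℝ} (hβl : α - 1 < β)
    (hβr : β < 0) :
    negGammaPRatio P (P ^ α) (P ^ ((1 + α) / 2)) ≤ negGammaPRatio P (P ^ α) (P ^ (β + 1)) ∧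
      negGammaPRatio P (P ^ α) (P ^ (β + 1)) < 0 := by
  have hP0 : 0 < P := by linarith
  have ha : 1 < P ^ α := one_lt_rpow hP hα
  have hau : P ^ α < P ^ (β + 1) := rpow_lt_rpow_of_exponent_lt hP (by linarith)
  have huP : P ^ (β + 1) < P := by
    simpa using rpow_lt_rpow_of_exponent_lt hP (by linarith : β + 1 < 1)
  have hm : (P ^ ((1 + α) / 2)) ^ 2 = P * P ^ α := by
    rw [← rpow_natCast, ← rpow_mul hP0.le, ← rpow_one_add' hP0.le (by linarith)]
    ring_nf
  exact ⟨negGammaPRatio_le hP.le ha.le (rpow_pos_of_pos hP0 _) hm (by linarith) (by nlinarith),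
    negGammaPRatio_neg ha hau huP⟩

lemma exists_negGammaPRatio_rpow_eq (hP : 1 < P) (hα0 : 0 < α) (hα1 : α < 1) {b : ℝ}
    (hb : negGammaPRatio P (P ^ α) (P ^ ((1 + α) / 2)) ≤ b) (hb0 : b < 0) :
    (∃ β₁, α - 1 < β₁ ∧ β₁ ≤ (α - 1) / 2 ∧ negGammaPRatio P (P ^ α) (P ^ (β₁ + 1)) = b) ∧
      ∃ β₂, (α - 1) / 2 ≤ β₂ ∧ β₂ < 0 ∧ negGammaPRatio P (P ^ α) (P ^ (β₂ + 1)) = b := by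
  set g : ℝ → ℝ := fun β => negGammaPRatio P (P ^ α) (P ^ (β + 1))
  have hg : ContinuousOn g (Icc (α - 1) 0) := continuousOn_negGammaPRatio_rpow hP hα0
  have hg_left : g (α - 1) = 0 := by simp [g, negGammaPRatio_left]
  have hg_right : g 0 = 0 := by simp [g, negGammaPRatio_right]
  have hg_mid : g ((α - 1) / 2) = negGammaPRatio P (P ^ α) (P ^ ((1 + α) / 2)) := by
    simp only [g]; rw [show (α - 1) / 2 + 1 = (1 + α) / 2 by ring]
  constructor
  · obtain ⟨β, ⟨hβl, hβr⟩, hβ⟩ := intermediate_value_Icc' (by linarith : α - 1 ≤ (α - 1) / 2)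
      (hg.mono (Icc_subset_Icc_right (by linarith))) ⟨hg_mid.symm ▸ hb, hg_left.symm ▸ hb0.le⟩
    refine ⟨β, lt_of_le_of_ne hβl ?_, hβr, hβ⟩
    rintro rfl
    exact hb0.ne (hβ.symm.trans hg_left)
  · obtain ⟨β, ⟨hβl, hβr⟩, hβ⟩ := intermediate_value_Icc (by linarith : (α - 1) / 2 ≤ 0)
      (hg.mono (Icc_subset_Icc_left (by linarith))) ⟨hg_mid.symm ▸ hb, hg_right.symm ▸ hb0.le⟩
    refine ⟨β, hβl, lt_of_le_of_ne hβr ?_, hβ⟩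
    rintro rfl
    exact hb0.ne (hβ.symm.trans hg_right)

end

/-- With `b_* = -(Γ_p((1+α)/2))²`: (i) for `α-1 < β < 0` one has
`b_* ≤ -Γ_p(β+1)/Γ_p(β+1-α) < 0`; (ii) every `b ∈ [b_*, 0)` is attained by some
`β₁ ∈ (α-1, (α-1)/2]` and some `β₂ ∈ [(α-1)/2, 0)`. -/
theorem critical_negative_range (p : ℕ) (hp : p.Prime) (α : ℝ)
    (hα0 : 0 < α) (hα1 : α < 1) :
    (∀ β : ℝ, α - 1 < β → β < 0 →
      -(gammaP p ((1 + α) / 2)) ^ 2 ≤ -(gammaP p (β + 1) / gammaP p (β + 1 - α)) ∧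
      -(gammaP p (β + 1) / gammaP p (β + 1 - α)) < 0) ∧
    (∀ b : ℝ, -(gammaP p ((1 + α) / 2)) ^ 2 ≤ b → b < 0 →
      (∃ β₁ : ℝ, α - 1 < β₁ ∧ β₁ ≤ (α - 1) / 2 ∧
        -(gammaP p (β₁ + 1) / gammaP p (β₁ + 1 - α)) = b) ∧
      (∃ β₂ : ℝ, (α - 1) / 2 ≤ β₂ ∧ β₂ < 0 ∧
        -(gammaP p (β₂ + 1) / gammaP p (β₂ + 1 - α)) = b)) := by
  have hP : 1 < (p : ℝ) := by exact_mod_cast hp.one_lt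
  simp only [neg_gammaP_div_gammaP_sub p hp.ne_zero, neg_sq_gammaP_eq p hp.ne_zero]
  exact ⟨fun β => negGammaPRatio_rpow_bounds hP hα0,
    fun b => exists_negGammaPRatio_rpow_eq hP hα0 hα1⟩
end

section
/- Let p be a prime and α > 0. Let B ⊂ B′ be two nearest-neighboring balls in ℚ_p, i.e. balls with m(B′) = p · m(B), and set f_B := (1/m(B)) 1_B − (1/m(B′)) 1_{B′}. Then for every x ∈ ℚ_p the integral ∫_{ℚ_p} (f_B(x) − f_B(y)) ‖x−y‖_p^{−(1+α)} dm(y) converges absolutely and −(1/Γ_p(−α)) ∫_{ℚ_p} (f_B(x) − f_B(y)) ‖x−y‖_p^{−(1+α)} dm(y) = m(B)^{−α} · f_B(x); that is, f_B is an eigenfunction of 𝔇^α with eigenvalue m(B)^{−α}. -/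
open MeasureTheory

/-!
Fix `x` and let `D` be the complement of the ball `‖y - x‖ ≤ p^k`. Every ball of radius at least
`p^k` around `x₀` contains or misses that small ball, so `f_B` is constant on it and only `D`
contributes. On `D ∩ B'` the distance `‖x - y‖` takes the single value `max ‖x - x₀‖ p^(k+1)`,
and `f_B` vanishes off `B'`; hence the `f_B(y)` part of the integral is a constant times
`∫_D f_B = -p^k f_B(x)`, because `f_B` has mean zero. The `f_B(x)` part is `f_B(x)` times the
integral of the kernel over `D`, a geometric series over the spheres `‖y - x‖ = p^(k+1+n)`, each
of measure `p^(k+1+n) (1 - 1/p)`. Comparing the sum with `Γ_p(-α)` gives the eigenvalue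
`p^(-kα)`.
-/

open Metric

lemma integrable_and_integral_sub_mul_of_eqOn_compl {X : Type*} [MeasurableSpace X]
    {μ : Measure X} {g K : X → ℝ} {D : Set X} {x : X} {c : ℝ} (hD : MeasurableSet D)
    (hg : Integrable g μ) (hg₀ : ∫ y, g y ∂μ = 0) (hK : IntegrableOn K D μ)
    (hout : ∀ y ∉ D, g y = g x) (hin : ∀ y ∈ D, g y * K y = c * g y) :
    Integrable (fun y => (g x - g y) * K y) μ ∧
      ∫ y, (g x - g y) * K y ∂μ = g x * (∫ y in D, K y ∂μ + c * μ.real Dᶜ) := by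
  have hsplit : (fun y => (g x - g y) * K y)
      = fun y => g x * D.indicator K y - c * D.indicator g y := by
    ext y
    by_cases hy : y ∈ D
    · simp [hy, sub_mul, hin y hy]
    · simp [hy, hout y hy]
  have hK' := (hK.integrable_indicator hD).const_mul (g x)
  have hg' := (hg.integrableOn.integrable_indicator hD).const_mul c
  have hgD : ∫ y in D, g y ∂μ = -(μ.real Dᶜ * g x) := by
    have h := integral_add_compl hD hg
    rw [hg₀, setIntegral_congr_fun hD.compl (fun y hy => hout y hy), setIntegral_const,
      smul_eq_mul] at h
    linarith
  refine ⟨hsplit ▸ hK'.sub hg', ?_⟩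
  rw [hsplit, integral_sub hK' hg', integral_const_mul, integral_const_mul, integral_indicator hD,
    integral_indicator hD, hgD]
  ring

lemma IsUltrametricDist.indicator_one_closedBall_apply_eq {X M : Type*} [PseudoMetricSpace X]
    [IsUltrametricDist X] [Zero M] [One M] {x y z : X} {r : ℝ} (h : dist y x ≤ r) :
    (closedBall z r).indicator (1 : X → M) y = (closedBall z r).indicator 1 x := by
  have hmem : y ∈ closedBall z r ↔ x ∈ closedBall z r := by
    rw [mem_closedBall_comm, ← closedBall_eq_of_mem (mem_closedBall.2 h), ← mem_closedBall_comm]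
  by_cases hy : y ∈ closedBall z r
  · rw [Set.indicator_of_mem hy, Set.indicator_of_mem (hmem.1 hy), Pi.one_apply, Pi.one_apply]
  · rw [Set.indicator_of_notMem hy, Set.indicator_of_notMem (mt hmem.2 hy)]

namespace Padic

variable {p : ℕ} [Fact p.Prime]

lemma one_lt_natCast : (1 : ℝ) < p := Nat.one_lt_cast.2 (Fact.out : p.Prime).one_lt

lemma dist_eq_zpow_of_lt_of_le {x y : ℚ_[p]} {n : ℤ} (h₁ : (p : ℝ) ^ (n - 1) < dist x y)
    (h₂ : dist x y ≤ (p : ℝ) ^ n) : dist x y = (p : ℝ) ^ n := by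
  rw [dist_eq_norm] at *
  refine h₂.antisymm (not_lt.1 fun h => h₁.not_ge ?_)
  rwa [norm_le_pow_iff_norm_lt_pow_add_one, sub_add_cancel]

lemma sphere_zpow_eq_diff (x : ℚ_[p]) (n : ℤ) :
    sphere x ((p : ℝ) ^ n) = closedBall x ((p : ℝ) ^ n) \ closedBall x ((p : ℝ) ^ (n - 1)) := by
  ext y
  simp only [mem_sphere, Set.mem_sdiff, mem_closedBall, not_le]
  constructor
  · intro h
    rw [h]
    exact ⟨le_rfl, zpow_lt_zpow_right₀ one_lt_natCast (sub_one_lt n)⟩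
  · rintro ⟨h₂, h₁⟩
    exact dist_eq_zpow_of_lt_of_le h₁ h₂

lemma compl_closedBall_zpow_eq_iUnion_sphere (x : ℚ_[p]) (k : ℤ) :
    (closedBall x ((p : ℝ) ^ k))ᶜ = ⋃ n : ℕ, sphere x ((p : ℝ) ^ (k + 1 + n)) := by
  ext y
  simp only [Set.mem_compl_iff, mem_closedBall, not_le, Set.mem_iUnion, mem_sphere]
  constructor
  · intro hy
    have hyx : y - x ≠ 0 := by
      rintro h
      rw [dist_eq_norm, h, norm_zero] at hy
      exact (zpow_pos (zero_lt_one.trans one_lt_natCast) k).not_gt hy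
    rw [dist_eq_norm, norm_eq_zpow_neg_valuation hyx] at hy ⊢
    have hk := (zpow_lt_zpow_iff_right₀ one_lt_natCast).1 hy
    exact ⟨(-(y - x).valuation - (k + 1)).toNat, by congr 1; omega⟩
  · rintro ⟨n, hn⟩
    rw [hn]
    exact zpow_lt_zpow_right₀ one_lt_natCast (by omega)

lemma dist_eq_max_of_mem_closedBall {x y x₀ : ℚ_[p]} {k : ℤ}
    (hy : y ∈ closedBall x₀ ((p : ℝ) ^ (k + 1))) (hxy : (p : ℝ) ^ k < dist x y) :
    dist x y = max (dist x x₀) ((p : ℝ) ^ (k + 1)) := by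
  rw [mem_closedBall, dist_comm] at hy
  rcases le_or_gt (dist x x₀) ((p : ℝ) ^ (k + 1)) with h | h
  · rw [max_eq_right h]
    exact dist_eq_zpow_of_lt_of_le (by rwa [add_sub_cancel_right])
      ((dist_triangle_max x x₀ y).trans (max_le h hy))
  · rw [max_eq_left h.le, IsUltrametricDist.dist_eq_max_of_dist_ne_dist x x₀ y
      (hy.trans_lt h).ne', max_eq_left (hy.trans h.le)]

end Padic

section HaarMeasure

variable {p : ℕ} [Fact p.Prime] [MeasurableSpace ℚ_[p]] {m : Measure ℚ_[p]}

lemma measureReal_closedBall_zpow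
    (hm : ∀ (x : ℚ_[p]) (k : ℤ), m (closedBall x ((p : ℝ) ^ k)) = ENNReal.ofReal ((p : ℝ) ^ k))
    (x : ℚ_[p]) (k : ℤ) : m.real (closedBall x ((p : ℝ) ^ k)) = (p : ℝ) ^ k := by
  rw [measureReal_def, hm,
    ENNReal.toReal_ofReal (zpow_pos (zero_lt_one.trans Padic.one_lt_natCast) k).le]

variable [BorelSpace ℚ_[p]]

lemma measureReal_sphere_zpow
    (hm : ∀ (x : ℚ_[p]) (k : ℤ), m (closedBall x ((p : ℝ) ^ k)) = ENNReal.ofReal ((p : ℝ) ^ k))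
    (x : ℚ_[p]) (n : ℤ) :
    m.real (sphere x ((p : ℝ) ^ n)) = (p : ℝ) ^ n * (1 - (p : ℝ)⁻¹) := by
  have hp := Padic.one_lt_natCast (p := p)
  have hsub : closedBall x ((p : ℝ) ^ (n - 1)) ⊆ closedBall x ((p : ℝ) ^ n) :=
    closedBall_subset_closedBall (zpow_le_zpow_right₀ hp.le (sub_one_lt n).le)
  rw [Padic.sphere_zpow_eq_diff, measureReal_sdiff hsub measurableSet_closedBall (by simp [hm]),
    measureReal_closedBall_zpow hm, measureReal_closedBall_zpow hm,
    zpow_sub_one₀ (zero_lt_one.trans hp).ne', mul_one_sub]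

lemma integrableOn_and_setIntegral_sphere_zpow_norm_sub_rpow
    (hm : ∀ (x : ℚ_[p]) (k : ℤ), m (closedBall x ((p : ℝ) ^ k)) = ENNReal.ofReal ((p : ℝ) ^ k))
    (x : ℚ_[p]) (n : ℤ) (s : ℝ) :
    IntegrableOn (fun y => ‖x - y‖ ^ (-s)) (sphere x ((p : ℝ) ^ n)) m ∧
    ∫ y in sphere x ((p : ℝ) ^ n), ‖x - y‖ ^ (-s) ∂m
      = (1 - (p : ℝ)⁻¹) * ((p : ℝ) ^ (1 - s)) ^ n := by
  have hp₀ : (0 : ℝ) < p := zero_lt_one.trans Padic.one_lt_natCast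
  have hconst : Set.EqOn (fun y => ‖x - y‖ ^ (-s)) (fun _ => ((p : ℝ) ^ n) ^ (-s))
      (sphere x ((p : ℝ) ^ n)) := fun y hy => by
    rw [mem_sphere, dist_comm, dist_eq_norm] at hy
    simp only [hy]
  have hfin : m (sphere x ((p : ℝ) ^ n)) ≠ ⊤ :=
    ((measure_mono sphere_subset_closedBall).trans_lt (by simp [hm])).ne
  refine ⟨(integrableOn_const hfin).congr_fun hconst.symm isClosed_sphere.measurableSet, ?_⟩
  have hpn : (0 : ℝ) < (p : ℝ) ^ n := zpow_pos hp₀ n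
  rw [setIntegral_congr_fun isClosed_sphere.measurableSet hconst, setIntegral_const,
    measureReal_sphere_zpow hm, smul_eq_mul, Real.rpow_zpow_comm hp₀.le, Real.rpow_sub hpn,
    Real.rpow_neg hpn.le, Real.rpow_one]
  ring

lemma integrableOn_and_setIntegral_compl_closedBall_norm_sub_rpow
    (hm : ∀ (x : ℚ_[p]) (k : ℤ), m (closedBall x ((p : ℝ) ^ k)) = ENNReal.ofReal ((p : ℝ) ^ k))
    {s : ℝ} (hs : 1 < s) (x : ℚ_[p]) (k : ℤ) :
    IntegrableOn (fun y => ‖x - y‖ ^ (-s)) (closedBall x ((p : ℝ) ^ k))ᶜ m ∧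
    ∫ y in (closedBall x ((p : ℝ) ^ k))ᶜ, ‖x - y‖ ^ (-s) ∂m
      = (1 - (p : ℝ)⁻¹) * ((p : ℝ) ^ (1 - s)) ^ (k + 1) / (1 - (p : ℝ) ^ (1 - s)) := by
  have hp := Padic.one_lt_natCast (p := p)
  have hshell (n : ℕ) := integrableOn_and_setIntegral_sphere_zpow_norm_sub_rpow hm x (k + 1 + n) s
  set a := (p : ℝ) ^ (1 - s)
  have ha₀ : 0 < a := Real.rpow_pos_of_pos (zero_lt_one.trans hp) _
  have ha₁ : a < 1 := Real.rpow_lt_one_of_one_lt_of_neg hp (by linarith)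
  have hsum : HasSum (fun n : ℕ => ∫ y in sphere x ((p : ℝ) ^ (k + 1 + n)), ‖x - y‖ ^ (-s) ∂m)
      ((1 - (p : ℝ)⁻¹) * a ^ (k + 1) / (1 - a)) := by
    have hterm (n : ℕ) :
        (1 - (p : ℝ)⁻¹) * a ^ (k + 1 + n) = (1 - (p : ℝ)⁻¹) * a ^ (k + 1) * a ^ n := by
      rw [zpow_add₀ ha₀.ne', zpow_natCast, mul_assoc]
    simp only [(hshell _).2, hterm, div_eq_mul_inv]
    exact (hasSum_geometric_of_lt_one ha₀.le ha₁).mul_left _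
  have hint :
      IntegrableOn (fun y => ‖x - y‖ ^ (-s)) (⋃ n : ℕ, sphere x ((p : ℝ) ^ (k + 1 + n))) m :=
    integrableOn_iUnion_of_summable_integral_norm (fun n => (hshell n).1) <| by
      simpa only [Real.norm_eq_abs, abs_of_nonneg (Real.rpow_nonneg (norm_nonneg _) _)]
        using hsum.summable
  have hdisj : Pairwise (Function.onFun Disjoint fun n : ℕ => sphere x ((p : ℝ) ^ (k + 1 + n))) :=
    fun i j hij => Set.disjoint_left.2 fun y hi hj => hij <| by
      have := zpow_right_injective₀ (zero_lt_one.trans hp) hp.ne'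
        ((mem_sphere.1 hi).symm.trans (mem_sphere.1 hj))
      omega
  rw [Padic.compl_closedBall_zpow_eq_iUnion_sphere]
  exact ⟨hint,
    (integral_iUnion (fun _ => isClosed_sphere.measurableSet) hdisj hint).trans hsum.tsum_eq⟩

end HaarMeasure

/-- `f_B` for `B = closedBall x₀ (p ^ k)` and `B' = closedBall x₀ (p ^ (k + 1))`. -/
noncomputable def nearestBallsFun (p : ℕ) [Fact p.Prime] (x₀ : ℚ_[p]) (k : ℤ) (y : ℚ_[p]) : ℝ :=
  (1 / (p : ℝ) ^ k) * (closedBall x₀ ((p : ℝ) ^ k)).indicator 1 y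
    - (1 / (p : ℝ) ^ (k + 1)) * (closedBall x₀ ((p : ℝ) ^ (k + 1))).indicator 1 y

namespace nearestBallsFun

variable {p : ℕ} [Fact p.Prime] {x₀ : ℚ_[p]} {k : ℤ}

lemma eq_of_dist_le {x y : ℚ_[p]} (h : dist y x ≤ (p : ℝ) ^ k) :
    nearestBallsFun p x₀ k y = nearestBallsFun p x₀ k x := by
  have h' := h.trans (zpow_le_zpow_right₀ Padic.one_lt_natCast.le (lt_add_one k).le)
  rw [nearestBallsFun, nearestBallsFun, IsUltrametricDist.indicator_one_closedBall_apply_eq h,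
    IsUltrametricDist.indicator_one_closedBall_apply_eq h']

lemma eq_zero_of_notMem {y : ℚ_[p]} (hy : y ∉ closedBall x₀ ((p : ℝ) ^ (k + 1))) :
    nearestBallsFun p x₀ k y = 0 := by
  have hy' : y ∉ closedBall x₀ ((p : ℝ) ^ k) := fun h => hy <|
    closedBall_subset_closedBall (zpow_le_zpow_right₀ Padic.one_lt_natCast.le (lt_add_one k).le) h
  simp [nearestBallsFun, hy, hy']

lemma mul_rpow_norm_sub {x y : ℚ_[p]} (hxy : (p : ℝ) ^ k < dist x y) (t : ℝ) :
    nearestBallsFun p x₀ k y * ‖x - y‖ ^ t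
      = (max (dist x x₀) ((p : ℝ) ^ (k + 1))) ^ t * nearestBallsFun p x₀ k y := by
  by_cases hy : y ∈ closedBall x₀ ((p : ℝ) ^ (k + 1))
  · rw [← dist_eq_norm, Padic.dist_eq_max_of_mem_closedBall hy hxy, mul_comm]
  · simp [eq_zero_of_notMem hy]

variable [MeasurableSpace ℚ_[p]] [BorelSpace ℚ_[p]] {m : Measure ℚ_[p]}

lemma integrable_and_integral_eq_zero
    (hm : ∀ (x : ℚ_[p]) (k : ℤ), m (closedBall x ((p : ℝ) ^ k)) = ENNReal.ofReal ((p : ℝ) ^ k)) :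
    Integrable (nearestBallsFun p x₀ k) m ∧ ∫ y, nearestBallsFun p x₀ k y ∂m = 0 := by
  have hind (n : ℤ) : Integrable ((closedBall x₀ ((p : ℝ) ^ n)).indicator (1 : ℚ_[p] → ℝ)) m :=
    (integrable_indicator_iff measurableSet_closedBall).2 (integrableOn_const (by simp [hm]))
  refine ⟨((hind k).const_mul (1 / (p : ℝ) ^ k)).sub
    ((hind (k + 1)).const_mul (1 / (p : ℝ) ^ (k + 1))), ?_⟩
  have hp₀ : (p : ℝ) ≠ 0 := (zero_lt_one.trans Padic.one_lt_natCast).ne'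
  simp only [nearestBallsFun]
  rw [integral_sub ((hind k).const_mul _) ((hind (k + 1)).const_mul _)]
  simp only [integral_const_mul, integral_indicator_one measurableSet_closedBall,
    measureReal_closedBall_zpow hm]
  field_simp
  ring

end nearestBallsFun

lemma neg_inv_gammaP_neg_mul {p : ℕ} (hp : 1 < p) {α : ℝ} (hα : 0 < α) (k : ℤ) :
    -(1 / gammaP p (-α)) * ((1 - (p : ℝ)⁻¹) * ((p : ℝ) ^ (-α)) ^ (k + 1) / (1 - (p : ℝ) ^ (-α))
      + ((p : ℝ) ^ (k + 1)) ^ (-(1 + α)) * (p : ℝ) ^ k) = ((p : ℝ) ^ k) ^ (-α) := by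
  have hp₁ : (1 : ℝ) < p := Nat.one_lt_cast.2 hp
  have hp₀ : (0 : ℝ) < p := zero_lt_one.trans hp₁
  set a := (p : ℝ) ^ (-α) with ha
  have ha₀ : 0 < a := Real.rpow_pos_of_pos hp₀ _
  have ha₁ : a < 1 := Real.rpow_lt_one_of_one_lt_of_neg hp₁ (neg_neg_iff_pos.2 hα)
  have hgamma : gammaP p (-α) = (1 - a / p) / (1 - a⁻¹) := by
    rw [gammaP, neg_neg, sub_eq_add_neg (-α), Real.rpow_add hp₀, Real.rpow_neg_one, ha,
      Real.rpow_neg hp₀.le α, inv_inv]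
    ring
  have hkernel : ((p : ℝ) ^ (k + 1)) ^ (-(1 + α)) = (a / p) ^ (k + 1) := by
    rw [← Real.rpow_zpow_comm hp₀.le, neg_add, Real.rpow_add hp₀, Real.rpow_neg_one, ← ha,
      div_eq_mul_inv, mul_comm]
  have h₁ : 1 - a ≠ 0 := (sub_pos.2 ha₁).ne'
  have h₂ : 1 - a⁻¹ ≠ 0 := (sub_neg.2 ((one_lt_inv₀ ha₀).2 ha₁)).ne
  have h₃ : (p : ℝ) - a ≠ 0 := (sub_pos.2 (ha₁.trans hp₁)).ne'
  rw [← Real.rpow_zpow_comm hp₀.le (-α) k, ← ha, hgamma, hkernel, div_zpow,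
    zpow_add_one₀ ha₀.ne', zpow_add_one₀ hp₀.ne']
  field_simp
  ring

/-- For nearest-neighboring balls `B = B(x₀, p^k) ⊂ B' = B(x₀, p^{k+1})`
(so `m(B') = p · m(B)`), the function `f_B = (1/m(B))1_B - (1/m(B'))1_{B'}` is an
eigenfunction of the Taibleson–Vladimirov operator `𝔇^α` with eigenvalue
`m(B)^{-α} = (p^k)^{-α}`, all defining integrals converging absolutely. -/
theorem eigenfunction_of_nearest_balls (p : ℕ) [Fact p.Prime]
    [MeasurableSpace ℚ_[p]] [BorelSpace ℚ_[p]] (m : Measure ℚ_[p])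
    (hm : ∀ (x : ℚ_[p]) (k : ℤ),
      m (Metric.closedBall x ((p : ℝ) ^ k)) = ENNReal.ofReal ((p : ℝ) ^ k))
    (α : ℝ) (hα : 0 < α) (x₀ : ℚ_[p]) (k : ℤ)
    (B B' : Set ℚ_[p]) (hB : B = Metric.closedBall x₀ ((p : ℝ) ^ k))
    (hB' : B' = Metric.closedBall x₀ ((p : ℝ) ^ (k + 1)))
    (fB : ℚ_[p] → ℝ)
    (hfB : fB = fun y => (1 / (p : ℝ) ^ k) * Set.indicator B 1 y
      - (1 / (p : ℝ) ^ (k + 1)) * Set.indicator B' 1 y) :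
    ∀ x : ℚ_[p],
      Integrable (fun y : ℚ_[p] => (fB x - fB y) * ‖x - y‖ ^ (-(1 + α))) m ∧
      -(1 / gammaP p (-α)) *
          ∫ y : ℚ_[p], (fB x - fB y) * ‖x - y‖ ^ (-(1 + α)) ∂m
        = ((p : ℝ) ^ k) ^ (-α) * fB x := by
  intro x
  obtain rfl : fB = nearestBallsFun p x₀ k := by subst hfB hB hB'; rfl
  obtain ⟨hKint, hK⟩ :=
    integrableOn_and_setIntegral_compl_closedBall_norm_sub_rpow hm (s := 1 + α) (by linarith) x k
  obtain ⟨hfint, hf₀⟩ := nearestBallsFun.integrable_and_integral_eq_zero (x₀ := x₀) (k := k) hm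
  obtain ⟨hint, heq⟩ := integrable_and_integral_sub_mul_of_eqOn_compl
    measurableSet_closedBall.compl hfint hf₀ hKint
    (fun y hy => nearestBallsFun.eq_of_dist_le (mem_closedBall.1 (not_not.1 hy)))
    (fun y hy => nearestBallsFun.mul_rpow_norm_sub (by rwa [dist_comm, ← not_le]) _)
  refine ⟨hint, ?_⟩
  rw [heq, hK, compl_compl, measureReal_closedBall_zpow hm, show 1 - (1 + α) = -α by ring]
  by_cases hx : x ∈ closedBall x₀ ((p : ℝ) ^ (k + 1))
  · rw [max_eq_right (mem_closedBall.1 hx), mul_left_comm,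
      neg_inv_gammaP_neg_mul (Fact.out : p.Prime).one_lt hα, mul_comm]
  · simp [nearestBallsFun.eq_zero_of_notMem hx]
end

section
/- Let p be a prime, α > 0, and let V : ℚ_p → ℝ be measurable and locally integrable. Suppose there is a nonempty open set U ⊆ ℚ_p with V(x) < 0 for m-almost every x ∈ U. For λ ≥ 0 define E_λ := inf { Q_α(u) + λ ∫_{ℚ_p} V u² dm : u locally constant with compact support, ∫_{ℚ_p} u² dm = 1 }. Then E_λ → −∞ as λ → ∞. -/
open MeasureTheory Filter Metric Topology

/-!
The energy `λ ↦ Q_α(u) + λ ∫ V u² dm` of a single test function `u` is affine in `λ`, so it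
suffices to find one admissible `u` with `∫ V u² dm < 0`. Since `ℚ_p` is ultrametric, a small
closed ball `B ⊆ U` is clopen and compact, and the normalized indicator `m(B)^{-1/2} 𝟙_B` is
such a `u`: it is locally constant with compact support, and
`∫ V u² dm = m(B)⁻¹ ∫_B V dm < 0`.
-/

lemma exists_forall_ge_add_mul_lt {𝕜 : Type*} [Field 𝕜] [LinearOrder 𝕜]
    [IsStrictOrderedRing 𝕜] (a : 𝕜) {b : 𝕜} (hb : b < 0) (M : 𝕜) : ∃ Λ, ∀ t, Λ ≤ t → a + t * b < M := by
  have h : Tendsto (fun t => a + t * b) atTop atBot :=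
    tendsto_atBot_add_const_left _ a (tendsto_id.atTop_mul_const_of_neg hb)
  exact eventually_atTop.1 (h.eventually (eventually_lt_atBot M))

lemma exists_closedBall_zpow_subset {X : Type*} [PseudoMetricSpace X] {x : X} {U : Set X}
    (hU : U ∈ 𝓝 x) {b : ℝ} (hb : 1 < b) : ∃ k : ℤ, closedBall x (b ^ k) ⊆ U := by
  have hb₀ : 0 < b := zero_lt_one.trans hb
  obtain ⟨n, -, hn⟩ :=
    (nhds_basis_closedBall_pow (inv_pos.2 hb₀) (inv_lt_one_of_one_lt₀ hb)).mem_iff.1 hU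
  exact ⟨-n, by rwa [zpow_neg, zpow_natCast, ← inv_pow]⟩

lemma setIntegral_neg_of_ae_neg {X : Type*} [MeasurableSpace X] {μ : Measure X} {s : Set X}
    {f : X → ℝ} (hf : IntegrableOn f s μ) (hneg : ∀ᵐ x ∂μ.restrict s, f x < 0) (hs : μ s ≠ 0) :
    ∫ x in s, f x ∂μ < 0 := by
  have hsupp : Function.support (fun x => -f x) =ᵐ[μ.restrict s] Set.univ :=
    ae_eq_univ.2 (ae_iff.1 (hneg.mono fun x hx => (neg_pos.2 hx).ne'))
  have hpos : 0 < ∫ x in s, -f x ∂μ := by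
    rw [integral_pos_iff_support_of_nonneg_ae (hneg.mono fun x hx => (neg_pos.2 hx).le) hf.neg,
      measure_congr hsupp, Measure.restrict_apply_univ]
    exact pos_iff_ne_zero.2 hs
  rwa [integral_neg, neg_pos] at hpos

section NormalizedIndicator

variable {X : Type*} [MeasurableSpace X] (μ : Measure X) (s : Set X)

/-- The indicator of `s` scaled to have unit `L²(μ)` norm (when `0 < μ s < ∞`). -/
noncomputable def normalizedIndicator : X → ℝ :=
  s.indicator fun _ => Real.sqrt (μ.real s)⁻¹

lemma normalizedIndicator_sq (x : X) :
    normalizedIndicator μ s x ^ 2 = s.indicator (fun _ => (μ.real s)⁻¹) x := by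
  by_cases hx : x ∈ s <;> simp [normalizedIndicator, hx]

lemma integral_mul_normalizedIndicator_sq {s : Set X} (hs : MeasurableSet s) (V : X → ℝ) :
    ∫ x, V x * normalizedIndicator μ s x ^ 2 ∂μ = (μ.real s)⁻¹ * ∫ x in s, V x ∂μ := by
  have h x : V x * normalizedIndicator μ s x ^ 2 =
      s.indicator (fun x => V x * (μ.real s)⁻¹) x := by
    by_cases hx : x ∈ s <;> simp [normalizedIndicator_sq, hx]
  simp_rw [h, integral_indicator hs, integral_mul_const, mul_comm]

lemma integral_normalizedIndicator_sq {s : Set X} (hs : MeasurableSet s) (h₀ : μ s ≠ 0)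
    (h_top : μ s ≠ ⊤) : ∫ x, normalizedIndicator μ s x ^ 2 ∂μ = 1 := by
  simpa [setIntegral_const, measureReal_ne_zero_iff h_top |>.2 h₀] using
    integral_mul_normalizedIndicator_sq μ hs 1

variable [TopologicalSpace X] {μ s}

lemma isLocallyConstant_normalizedIndicator (hs : IsClopen s) :
    IsLocallyConstant (normalizedIndicator μ s) :=
  ((LocallyConstant.const X _).indicator hs).isLocallyConstant

lemma hasCompactSupport_normalizedIndicator (hs : IsCompact s) (hs' : IsClosed s) :
    HasCompactSupport (normalizedIndicator μ s) :=
  HasCompactSupport.intro' hs hs' fun _ hx => Set.indicator_of_notMem hx _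

end NormalizedIndicator

theorem bottom_of_spectrum_tendsto_neg_infty_general (p : ℕ) [Fact p.Prime]
    [MeasurableSpace ℚ_[p]] [BorelSpace ℚ_[p]] (m : Measure ℚ_[p])
    (hm : ∀ (x : ℚ_[p]) (k : ℤ),
      m (Metric.closedBall x ((p : ℝ) ^ k)) = ENNReal.ofReal ((p : ℝ) ^ k))
    (α : ℝ)
    (V : ℚ_[p] → ℝ) (hVloc : LocallyIntegrable V m)
    (U : Set ℚ_[p]) (hUopen : IsOpen U) (hUne : U.Nonempty)
    (hVU : ∀ᵐ x ∂m, x ∈ U → V x < 0) :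
    ∀ M : ℝ, ∃ Λ : ℝ, ∀ lam : ℝ, Λ ≤ lam →
      ∃ u : ℚ_[p] → ℝ, IsLocallyConstant u ∧ HasCompactSupport u ∧
        (∫ x : ℚ_[p], u x ^ 2 ∂m) = 1 ∧
        Qform p m α u + lam * ∫ x : ℚ_[p], V x * u x ^ 2 ∂m < M := by
  intro M
  obtain ⟨x₀, hx₀⟩ := hUne
  have hp : (1 : ℝ) < p := by exact_mod_cast (Fact.out : p.Prime).one_lt
  obtain ⟨k, hBU⟩ := exists_closedBall_zpow_subset (hUopen.mem_nhds hx₀) hp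
  set B := closedBall x₀ ((p : ℝ) ^ k)
  have hpk : (0 : ℝ) < (p : ℝ) ^ k := zpow_pos (zero_lt_one.trans hp) k
  have hB : IsClopen B := IsUltrametricDist.isClopen_closedBall x₀ hpk.ne'
  have hB_cpt : IsCompact B := isCompact_closedBall x₀ _
  have hB_meas : MeasurableSet B := hB.isClosed.measurableSet
  have hmB : m B = ENNReal.ofReal ((p : ℝ) ^ k) := hm x₀ k
  have hB₀ : m B ≠ 0 := by simpa [hmB] using hpk
  have hB_top : m B ≠ ⊤ := by simp [hmB]
  have hVB : ∫ x in B, V x ∂m < 0 :=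
    setIntegral_neg_of_ae_neg (hVloc.integrableOn_isCompact hB_cpt)
      ((ae_restrict_iff' hB_meas).2 (hVU.mono fun x hx hxB => hx (hBU hxB))) hB₀
  have hslope : ∫ x, V x * normalizedIndicator m B x ^ 2 ∂m < 0 := by
    rw [integral_mul_normalizedIndicator_sq m hB_meas]
    exact mul_neg_of_pos_of_neg (inv_pos.2 (ENNReal.toReal_pos hB₀ hB_top)) hVB
  obtain ⟨Λ, hΛ⟩ := exists_forall_ge_add_mul_lt (Qform p m α (normalizedIndicator m B)) hslope M
  exact ⟨Λ, fun lam hlam => ⟨normalizedIndicator m B, isLocallyConstant_normalizedIndicator hB,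
    hasCompactSupport_normalizedIndicator hB_cpt hB.isClosed,
    integral_normalizedIndicator_sq m hB_meas hB₀ hB_top, hΛ lam hlam⟩⟩

/-- If the locally integrable potential `V` is negative a.e. on some nonempty open set,
then the bottom of the spectrum `E_λ` of `𝔇^α + λV` tends to `-∞` as `λ → ∞`:
for every `M` there is `Λ` such that for all `λ ≥ Λ` some normalized locally constant
compactly supported `u` satisfies `Q_α(u) + λ ∫ V u² dm < M`. -/
theorem bottom_of_spectrum_tendsto_neg_infty (p : ℕ) [Fact p.Prime]
    [MeasurableSpace ℚ_[p]] [BorelSpace ℚ_[p]] (m : Measure ℚ_[p])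
    (hm : ∀ (x : ℚ_[p]) (k : ℤ),
      m (Metric.closedBall x ((p : ℝ) ^ k)) = ENNReal.ofReal ((p : ℝ) ^ k))
    (α : ℝ) (hα : 0 < α)
    (V : ℚ_[p] → ℝ) (hVmeas : Measurable V) (hVloc : LocallyIntegrable V m)
    (U : Set ℚ_[p]) (hUopen : IsOpen U) (hUne : U.Nonempty)
    (hVU : ∀ᵐ x ∂m, x ∈ U → V x < 0) :
    ∀ M : ℝ, ∃ Λ : ℝ, ∀ lam : ℝ, Λ ≤ lam →
      ∃ u : ℚ_[p] → ℝ, IsLocallyConstant u ∧ HasCompactSupport u ∧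
        (∫ x : ℚ_[p], u x ^ 2 ∂m) = 1 ∧
        Qform p m α u + lam * ∫ x : ℚ_[p], V x * u x ^ 2 ∂m < M :=
  bottom_of_spectrum_tendsto_neg_infty_general p m hm α V hVloc U hUopen hUne hVU
end

section
/- Let p ≥ 2 be an integer, 0 < κ < 1, and let X = [0,∞) with Lebesgue measure l. For r ∈ ℤ and x ∈ X let I_r(x) denote the unique p-adic interval [k p^r, (k+1) p^r) (k a non-negative integer) containing x. Fix r ∈ ℤ, a p-adic interval I of rank r, and a p-adic subinterval I_i ⊂ I of rank r−1, and set ψ := p^{−(r−1)} 1_{I_i} − p^{−r} 1_I. Then for every x ∈ [0,∞) the series (Lψ)(x) := Σ_{s ∈ ℤ} (1−κ) κ^{s−1} ( ψ(x) − p^{−s} ∫_{I_s(x)} ψ dl ) converges absolutely and (Lψ)(x) = κ^{r−1} ψ(x); i.e. ψ is an eigenfunction of the Dyson hierarchical Laplacian with eigenvalue κ^{r−1}. -/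
/-!
The function `ψ` vanishes outside `I`, has integral zero, and is constant on every `p`-adic
interval of rank `r - 1`. Since `p`-adic intervals are nested or disjoint, the interval `I_s(x)`
either contains `I`, misses it, or (for `s < r`) lies inside an interval of rank `r - 1`.
Hence the average of `ψ` over `I_s(x)` is `0` for `s ≥ r` and `ψ x` for `s < r`, and the
Laplacian series reduces to `ψ x · Σ_{s ≥ r} (1 - κ) κ^(s-1) = κ^(r-1) ψ x`.
-/

open MeasureTheory

/-- The `p`-adic interval of rank `r` containing `x`:
`I_r(x) = [k p^r, (k+1) p^r)` with `k = ⌊x / p^r⌋`. -/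
noncomputable def padicInterval (p : ℕ) (r : ℤ) (x : ℝ) : Set ℝ :=
  Set.Ico ((⌊x / (p : ℝ) ^ r⌋ : ℝ) * (p : ℝ) ^ r)
    (((⌊x / (p : ℝ) ^ r⌋ : ℝ) + 1) * (p : ℝ) ^ r)

open Set

section PadicInterval

variable {p : ℕ}

lemma mem_padicInterval_iff (hp : 0 < p) {s : ℤ} {x z : ℝ} :
    z ∈ padicInterval p s x ↔ ⌊z / (p : ℝ) ^ s⌋ = ⌊x / (p : ℝ) ^ s⌋ := by
  have hps : (0 : ℝ) < (p : ℝ) ^ s := zpow_pos (Nat.cast_pos.mpr hp) s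
  rw [padicInterval, mem_Ico, Int.floor_eq_iff, le_div_iff₀ hps, div_lt_iff₀ hps]

lemma mem_padicInterval_self (hp : 0 < p) (s : ℤ) (x : ℝ) : x ∈ padicInterval p s x :=
  (mem_padicInterval_iff hp).mpr rfl

lemma floor_div_zpow_eq_of_le (hp : 0 < p) {s t : ℤ} (hst : s ≤ t) {x y : ℝ}
    (h : ⌊x / (p : ℝ) ^ s⌋ = ⌊y / (p : ℝ) ^ s⌋) : ⌊x / (p : ℝ) ^ t⌋ = ⌊y / (p : ℝ) ^ t⌋ := by
  obtain ⟨n, rfl⟩ : ∃ n : ℕ, t = s + n := ⟨(t - s).toNat, by omega⟩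
  have hrank : ∀ z : ℝ, ⌊z / (p : ℝ) ^ (s + n)⌋ = ⌊z / (p : ℝ) ^ s⌋ / ((p ^ n : ℕ) : ℤ) := by
    intro z
    rw [zpow_add₀ (by positivity), ← div_div, zpow_natCast, ← Nat.cast_pow,
      Int.floor_div_natCast]
  rw [hrank, hrank, h]

lemma mem_padicInterval_iff_of_mem (hp : 0 < p) {s t : ℤ} (hst : s ≤ t) {x y z : ℝ}
    (hz : z ∈ padicInterval p s x) : z ∈ padicInterval p t y ↔ x ∈ padicInterval p t y := by
  rw [mem_padicInterval_iff hp, mem_padicInterval_iff hp,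
    floor_div_zpow_eq_of_le hp hst ((mem_padicInterval_iff hp).mp hz)]

lemma padicInterval_subset_or_disjoint (hp : 0 < p) {s t : ℤ} (hst : s ≤ t) (x y : ℝ) :
    padicInterval p s x ⊆ padicInterval p t y ∨
      Disjoint (padicInterval p s x) (padicInterval p t y) := by
  by_cases hx : x ∈ padicInterval p t y
  · exact Or.inl fun z hz => (mem_padicInterval_iff_of_mem hp hst hz).mpr hx
  · exact Or.inr <| disjoint_left.mpr fun z hz hzt =>
      hx ((mem_padicInterval_iff_of_mem hp hst hz).mp hzt)

lemma Ico_eq_padicInterval (hp : 0 < p) (r k : ℤ) :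
    Ico ((k : ℝ) * (p : ℝ) ^ r) (((k : ℝ) + 1) * (p : ℝ) ^ r) =
      padicInterval p r (k * (p : ℝ) ^ r) := by
  have hps : (p : ℝ) ^ r ≠ 0 := (zpow_pos (Nat.cast_pos.mpr hp) r).ne'
  rw [padicInterval, mul_div_cancel_right₀ _ hps, Int.floor_intCast]

lemma measurableSet_padicInterval (p : ℕ) (s : ℤ) (x : ℝ) :
    MeasurableSet (padicInterval p s x) :=
  measurableSet_Ico

lemma volume_real_padicInterval (p : ℕ) (s : ℤ) (x : ℝ) :
    volume.real (padicInterval p s x) = (p : ℝ) ^ s := by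
  rw [padicInterval, Real.volume_real_Ico, ← sub_mul, add_sub_cancel_left, one_mul,
    max_eq_left (by positivity)]

end PadicInterval

noncomputable def dysonEigenfunction (p : ℕ) (r : ℤ) (J J' : Set ℝ) (t : ℝ) : ℝ :=
  (p : ℝ) ^ (-(r - 1)) * J'.indicator 1 t - (p : ℝ) ^ (-r) * J.indicator 1 t

section DysonEigenfunction

variable {p : ℕ} {r : ℤ} {J J' : Set ℝ}

lemma dysonEigenfunction_eq_zero_of_notMem (hJ : J' ⊆ J) {t : ℝ} (ht : t ∉ J) :
    dysonEigenfunction p r J J' t = 0 := by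
  simp [dysonEigenfunction, indicator_of_notMem ht, indicator_of_notMem (fun h => ht (hJ h))]

lemma integral_dysonEigenfunction {μ : Measure ℝ} (hJ : MeasurableSet J)
    (hJ' : MeasurableSet J') (hJfin : μ J ≠ ⊤) (hJ'fin : μ J' ≠ ⊤) :
    ∫ t, dysonEigenfunction p r J J' t ∂μ =
      (p : ℝ) ^ (-(r - 1)) * μ.real J' - (p : ℝ) ^ (-r) * μ.real J := by
  have hint : ∀ {K : Set ℝ}, MeasurableSet K → μ K ≠ ⊤ → Integrable (K.indicator 1) μ :=
    fun hK hKfin => (integrable_indicator_iff hK).mpr (integrableOn_const (C := (1 : ℝ)) hKfin)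
  simp only [dysonEigenfunction]
  rw [integral_sub ((hint hJ' hJ'fin).const_mul _) ((hint hJ hJfin).const_mul _),
    integral_const_mul, integral_const_mul, integral_indicator_one hJ',
    integral_indicator_one hJ]

variable {y y' : ℝ}

local notation "ψ" => dysonEigenfunction p r (padicInterval p r y) (padicInterval p (r - 1) y')

lemma integral_dysonEigenfunction_padicInterval (hp : 0 < p) : ∫ t, ψ t = 0 := by
  have hp0 : (p : ℝ) ≠ 0 := Nat.cast_ne_zero.mpr hp.ne'
  rw [integral_dysonEigenfunction (measurableSet_padicInterval p r y)
    (measurableSet_padicInterval p _ y') measure_Ico_lt_top.ne measure_Ico_lt_top.ne,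
    volume_real_padicInterval, volume_real_padicInterval, ← zpow_add₀ hp0, ← zpow_add₀ hp0]
  simp

lemma dysonEigenfunction_eq_of_mem (hp : 0 < p) {x z : ℝ}
    (hz : z ∈ padicInterval p (r - 1) x) :
    ψ z = ψ x := by
  have hJ' := mem_padicInterval_iff_of_mem hp le_rfl hz (y := y')
  have hJ := mem_padicInterval_iff_of_mem hp (by omega : r - 1 ≤ r) hz (y := y)
  rw [dysonEigenfunction, dysonEigenfunction, indicator_eq_indicator (g := 1) hJ' rfl,
    indicator_eq_indicator (g := 1) hJ rfl]

lemma setIntegral_dysonEigenfunction_of_le (hp : 0 < p)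
    (hJ : padicInterval p (r - 1) y' ⊆ padicInterval p r y) {s : ℤ} (hrs : r ≤ s) (x : ℝ) :
    ∫ t in padicInterval p s x, ψ t = 0 := by
  rcases padicInterval_subset_or_disjoint hp hrs y x with hsub | hdisj
  · rw [setIntegral_eq_integral_of_forall_compl_eq_zero fun t ht =>
      dysonEigenfunction_eq_zero_of_notMem hJ fun h => ht (hsub h),
      integral_dysonEigenfunction_padicInterval hp]
  · exact setIntegral_eq_zero_of_forall_eq_zero fun t ht =>
      dysonEigenfunction_eq_zero_of_notMem hJ (disjoint_right.mp hdisj ht)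

lemma zpow_neg_mul_setIntegral_dysonEigenfunction_of_lt (hp : 0 < p) {s : ℤ} (hsr : s < r)
    (x : ℝ) :
    (p : ℝ) ^ (-s) * ∫ t in padicInterval p s x, ψ t = ψ x := by
  have hp0 : (p : ℝ) ≠ 0 := Nat.cast_ne_zero.mpr hp.ne'
  have hconst : EqOn ψ (fun _ => ψ x) (padicInterval p s x) := fun z hz =>
    dysonEigenfunction_eq_of_mem hp <|
      (mem_padicInterval_iff_of_mem hp (by omega) hz).mpr (mem_padicInterval_self hp _ x)
  rw [setIntegral_congr_fun (measurableSet_padicInterval p s x) hconst, setIntegral_const,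
    volume_real_padicInterval, smul_eq_mul, ← mul_assoc, ← zpow_add₀ hp0, neg_add_cancel,
    zpow_zero, one_mul]

lemma dysonEigenfunction_sub_average (hp : 0 < p)
    (hJ : padicInterval p (r - 1) y' ⊆ padicInterval p r y) (s : ℤ) (x : ℝ) :
    ψ x - (p : ℝ) ^ (-s) * ∫ t in padicInterval p s x, ψ t = if r ≤ s then ψ x else 0 := by
  split_ifs with hrs
  · rw [setIntegral_dysonEigenfunction_of_le hp hJ hrs, mul_zero, sub_zero]
  · rw [zpow_neg_mul_setIntegral_dysonEigenfunction_of_lt hp (not_le.mp hrs), sub_self]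

end DysonEigenfunction

lemma hasSum_dyson_weights {κ : ℝ} (hκ0 : 0 < κ) (hκ1 : κ < 1) (r : ℤ) :
    HasSum (fun s : ℤ => if r ≤ s then (1 - κ) * κ ^ (s - 1) else 0) (κ ^ (r - 1)) := by
  have hinj : Function.Injective (fun n : ℕ => r + n) := fun a b h => by simpa using h
  rw [← hinj.hasSum_iff]
  · have hterm : ∀ n : ℕ, (if r ≤ r + n then (1 - κ) * κ ^ (r + n - 1) else 0) =
        κ ^ (r - 1) * (1 - κ) * κ ^ n := fun n => by
      rw [if_pos (by omega), show r + n - 1 = r - 1 + n by ring, zpow_add₀ hκ0.ne',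
        zpow_natCast]
      ring
    have h := (hasSum_geometric_of_lt_one hκ0.le hκ1).mul_left (κ ^ (r - 1) * (1 - κ))
    rwa [mul_inv_cancel_right₀ (sub_pos.mpr hκ1).ne', ← funext hterm] at h
  · intro s hs
    rw [if_neg fun hrs => hs ⟨(s - r).toNat, by simp; omega⟩]

/-- Eigenfunctions of the Dyson hierarchical Laplacian: if `I` is a `p`-adic interval
of rank `r`, `Ii ⊆ I` a `p`-adic subinterval of rank `r-1`, and
`ψ = p^{-(r-1)} 1_{Ii} - p^{-r} 1_I`, then for every `x ∈ [0,∞)` the series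
`(Lψ)(x) = Σ_{s∈ℤ} (1-κ) κ^{s-1} (ψ(x) - p^{-s} ∫_{I_s(x)} ψ dl)` converges
absolutely and equals `κ^{r-1} ψ(x)`. -/
theorem dyson_laplacian_eigenfunction (p : ℕ) (hp : 2 ≤ p) (κ : ℝ)
    (hκ0 : 0 < κ) (hκ1 : κ < 1) (r : ℤ) (k k' : ℕ)
    (I Ii : Set ℝ)
    (hI : I = Set.Ico ((k : ℝ) * (p : ℝ) ^ r) (((k : ℝ) + 1) * (p : ℝ) ^ r))
    (hIi : Ii = Set.Ico ((k' : ℝ) * (p : ℝ) ^ (r - 1))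
      (((k' : ℝ) + 1) * (p : ℝ) ^ (r - 1)))
    (hsub : Ii ⊆ I)
    (ψ : ℝ → ℝ)
    (hψ : ψ = fun t => (p : ℝ) ^ (-(r - 1)) * Set.indicator Ii 1 t
      - (p : ℝ) ^ (-r) * Set.indicator I 1 t) :
    ∀ x : ℝ, 0 ≤ x →
      Summable (fun s : ℤ =>
        |(1 - κ) * κ ^ (s - 1) *
          (ψ x - (p : ℝ) ^ (-s) * ∫ t in padicInterval p s x, ψ t)|) ∧
      (∑' s : ℤ, (1 - κ) * κ ^ (s - 1) *
          (ψ x - (p : ℝ) ^ (-s) * ∫ t in padicInterval p s x, ψ t))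
        = κ ^ (r - 1) * ψ x := by
  intro x _
  have hp0 : 0 < p := by omega
  obtain ⟨y, rfl⟩ : ∃ y, I = padicInterval p r y :=
    ⟨_, hI.trans (by exact_mod_cast Ico_eq_padicInterval hp0 r k)⟩
  obtain ⟨y', rfl⟩ : ∃ y', Ii = padicInterval p (r - 1) y' :=
    ⟨_, hIi.trans (by exact_mod_cast Ico_eq_padicInterval hp0 (r - 1) k')⟩
  have hterm : ∀ s : ℤ, (1 - κ) * κ ^ (s - 1) *
      (ψ x - (p : ℝ) ^ (-s) * ∫ t in padicInterval p s x, ψ t) =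
      (if r ≤ s then (1 - κ) * κ ^ (s - 1) else 0) * ψ x := by
    intro s
    rw [show ψ = dysonEigenfunction p r _ _ from hψ, dysonEigenfunction_sub_average hp0 hsub]
    split_ifs <;> ring
  have hsum := (hasSum_dyson_weights hκ0 hκ1 r).mul_right (ψ x)
  simp only [hterm]
  exact ⟨summable_abs_iff.mpr hsum.summable, hsum.tsum_eq⟩
end
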